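/- arXiv:2111.14050 — 5 statements merged into one kernel-verified Lean document; each statement's English description precedes it below -/
import Mathlib

section
/- Let Q ⊆ ℝ^n be a polytope, let c, v ∈ ℝ^n with v ≠ 0, and let x^0, x^1, …, x^k be a Shadow-rule path on Q with auxiliary vector v and objective c whose starting vertex x^0 maximizes ⟨c,·⟩ over the v-minimal face F = {x ∈ Q : ⟨v,x⟩ = min_{y ∈ Q} ⟨v,y⟩}. Then there exists an index i with 0 ≤ i ≤ k such that x^i maximizes ⟨c,·⟩ over Q and ⟨c, x^j⟩ < ⟨c, x^{j+1}⟩ for every j < i; in particular, the initial segment of the path up to x^i is both strictly v-monotone and strictly c-monotone. -/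
open Finset

attribute [local instance] Classical.propDecidable

noncomputable section

/-- Standard dot product on `Fin n → ℝ`. -/
def dotR {n : ℕ} (c x : Fin n → ℝ) : ℝ := ∑ i, c i * x i

/-- A polytope: the convex hull of a finite nonempty set of points. -/
def IsPolytope {n : ℕ} (P : Set (Fin n → ℝ)) : Prop :=
  ∃ V : Finset (Fin n → ℝ), V.Nonempty ∧ P = convexHull ℝ (V : Set (Fin n → ℝ))

/-- A 0/1 polytope: the convex hull of a finite nonempty subset of `{0,1}^n`. -/
def IsPolytope01 {n : ℕ} (P : Set (Fin n → ℝ)) : Prop :=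
  ∃ V : Finset (Fin n → ℝ), V.Nonempty ∧ (∀ w ∈ V, ∀ i, w i = 0 ∨ w i = 1) ∧
    P = convexHull ℝ (V : Set (Fin n → ℝ))

/-- A vertex of `P` is an extreme point of `P`. -/
def IsVertex {n : ℕ} (P : Set (Fin n → ℝ)) (x : Fin n → ℝ) : Prop :=
  x ∈ P.extremePoints ℝ

/-- Two distinct vertices are adjacent when the segment between them is a face. -/
def Adjacent {n : ℕ} (P : Set (Fin n → ℝ)) (x y : Fin n → ℝ) : Prop :=
  IsVertex P x ∧ IsVertex P y ∧ x ≠ y ∧ IsExtreme ℝ P (segment ℝ x y)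

/-- `u` is a `w`-improving neighbor of `x`. -/
def ImpNbr {n : ℕ} (P : Set (Fin n → ℝ)) (w x u : Fin n → ℝ) : Prop :=
  Adjacent P x u ∧ dotR w x < dotR w u

/-- A Shadow-rule path on `P` with auxiliary vector `v` and objective `c`:
vertices `x 0, …, x k`, each step a `v`-improving neighbor maximizing the slope
`⟨c, u − xᵢ⟩ / ⟨v, u − xᵢ⟩` over all `v`-improving neighbors, and the last vertex
has no `v`-improving neighbor. -/
def ShadowPath {n : ℕ} (P : Set (Fin n → ℝ)) (c v : Fin n → ℝ) (k : ℕ)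
    (x : ℕ → Fin n → ℝ) : Prop :=
  (∀ i ≤ k, IsVertex P (x i)) ∧
  (∀ i < k, ImpNbr P v (x i) (x (i + 1)) ∧
    ∀ u, ImpNbr P v (x i) u →
      dotR c (u - x i) / dotR v (u - x i)
        ≤ dotR c (x (i + 1) - x i) / dotR v (x (i + 1) - x i)) ∧
  (∀ u, ¬ ImpNbr P v (x k) u)

/-- `f(u)` relative to `x0`: the largest index (in `1, …, n` labelling) where `u`
differs from `x0`, and `0` if there is none. -/
def lastIdx {n : ℕ} (x0 u : Fin n → ℝ) : ℕ :=
  (Finset.univ.filter fun j : Fin n => u j ≠ x0 j).sup fun j => (j : ℕ) + 1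

/-- `f(w)` for a 0/1 vector: the largest index (in `1, …, n` labelling) with
`w j = 1`, and `0` for the zero vector. -/
def lastOne {n : ℕ} (w : Fin n → ℝ) : ℕ :=
  (Finset.univ.filter fun j : Fin n => w j = 1).sup fun j => (j : ℕ) + 1

/-!
Along the initial stretch of the path on which `c` strictly increases, every vertex `xᵢ`
maximizes `c - sᵢ • v` over `Q` for some slope `sᵢ ≥ 0`. At `x⁰` this holds for any `s₀` above
the finitely many slopes `⟨c, z - x⁰⟩ / ⟨v, z - x⁰⟩` towards vertices `z` off the `v`-minimal face,
and `sᵢ₊₁` is the slope of the Shadow step. The invariant propagates because a vertex maximizing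
`c - s • v` but not `c - t • v`, with `t < s`, has a `v`-improving neighbour of slope `> t`: it
fails to maximize `c - t' • v` for some `t < t' < s`, and a vertex of a polytope that does not
maximize a linear functional has an improving neighbour. Where `c` stops increasing, every
`v`-improving neighbour has slope `≤ 0`, and the same argument with `t = 0` shows that the vertex
maximizes `c`.

The existence of improving neighbours is proved by induction on the number of vertices: tilting a
functional that exposes the vertex towards the objective exposes a smaller face through the
vertex that contains a better vertex.
-/

section Polytope

variable {E : Type*} [NormedAddCommGroup E] [NormedSpace ℝ E]

theorem convexHull_extremePoints_of_finite {K : Set E} (hK : IsCompact K) (hKc : Convex ℝ K)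
    (hfin : (K.extremePoints ℝ).Finite) : convexHull ℝ (K.extremePoints ℝ) = K :=
  (hfin.isClosed_convexHull ℝ).closure_eq.symm.trans (closure_convexHull_extremePoints hK hKc)

theorem ConvexOn.le_of_forall_extremePoints_le {K : Set E} (hK : IsCompact K) (hKc : Convex ℝ K)
    (hfin : (K.extremePoints ℝ).Finite) {f : E → ℝ} (hf : ConvexOn ℝ K f) {M : ℝ}
    (h : ∀ y ∈ K.extremePoints ℝ, f y ≤ M) {p : E} (hp : p ∈ K) : f p ≤ M := by
  rw [← convexHull_extremePoints_of_finite hK hKc hfin] at hp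
  obtain ⟨y, hy, hpy⟩ := hf.exists_ge_of_mem_convexHull extremePoints_subset hp
  exact hpy.trans (h y hy)

theorem exists_forall_lt_of_mem_extremePoints {K S : Set E} (hKc : Convex ℝ K) (hS : S.Finite)
    (hSK : S ⊆ K) {x : E} (hx : x ∈ K.extremePoints ℝ) :
    ∃ φ : StrongDual ℝ E, ∀ y ∈ S, y ≠ x → φ y < φ x := by
  have hx' : x ∉ convexHull ℝ (S \ {x}) := fun h =>
    (hKc.mem_extremePoints_iff_mem_sdiff_convexHull_sdiff.1 hx).2
      (convexHull_mono (Set.sdiff_subset_sdiff_left hSK) h)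
  obtain ⟨φ, a, hφ, ha⟩ := geometric_hahn_banach_closed_point (convex_convexHull ℝ _)
    (hS.sdiff.isClosed_convexHull ℝ) hx'
  exact ⟨φ, fun y hy hyx => (hφ y (subset_convexHull ℝ _ ⟨hy, hyx⟩)).trans ha⟩

theorem exists_lt_lt_of_mem_extremePoints {A : Set E} {x y z : E} (hx : x ∈ A)
    (hy : y ∈ A.extremePoints ℝ) (hz : z ∈ A.extremePoints ℝ) (hyx : y ≠ x) (hzx : z ≠ x)
    (hyz : y ≠ z) : ∃ g : StrongDual ℝ E, g x < g y ∧ g z < g x := by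
  have h0 : (0 : E) ∉ convexHull ℝ {y - x, x - z} := by
    rw [convexHull_pair, mem_segment_iff_sameRay, zero_sub, sub_zero, ← neg_sub z x,
      sameRay_neg_iff]
    intro hray
    rcases wbtw_total_of_sameRay_vsub_left (x := x) (y := y) (z := z) hray with h | h
    · exact hyx (hy.2 hx hz.1
        (mem_openSegment_of_ne_left_right hyx.symm hyz.symm h.mem_segment)).symm
    · exact hzx (hz.2 hx hy.1 (mem_openSegment_of_ne_left_right hzx.symm hyz h.mem_segment)).symm
  obtain ⟨g, a, hg0, hg⟩ := geometric_hahn_banach_point_closed (convex_convexHull ℝ _)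
    ((Set.toFinite _).isClosed_convexHull ℝ) h0
  have h1 := hg _ (subset_convexHull ℝ _ (Set.mem_insert _ _))
  have h2 := hg _ (subset_convexHull ℝ _ (Set.mem_insert_of_mem _ rfl))
  simp only [map_zero, map_sub] at hg0 h1 h2
  exact ⟨g, by linarith, by linarith⟩

theorem exists_tilt {S : Set E} (hS : S.Finite) {x : E} {φ g : StrongDual ℝ E}
    (hφ : ∀ y ∈ S, y ≠ x → φ y < φ x) (hg : ∃ y ∈ S, g x < g y) :
    ∃ f : StrongDual ℝ E, (∀ y ∈ S, f y ≤ f x) ∧ (∃ y ∈ S, f y = f x ∧ g x < g y) ∧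
      ∀ y ∈ S, y ≠ x → f y = f x → g x < g y := by
  have hne : ∀ y, g x < g y → y ≠ x := by rintro y hy rfl; exact hy.false
  obtain ⟨y₀, ⟨hy₀, hgy₀⟩, hmax⟩ := Set.exists_max_image {y ∈ S | g x < g y}
    (fun y => (g y - g x) / (φ x - φ y)) (hS.subset (Set.sep_subset _ _)) hg
  set t := (g y₀ - g x) / (φ x - φ y₀)
  have hφy₀ : 0 < φ x - φ y₀ := sub_pos.2 (hφ y₀ hy₀ (hne y₀ hgy₀))
  have ht : 0 < t := div_pos (sub_pos.2 hgy₀) hφy₀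
  have hlt : ∀ y ∈ S, y ≠ x → g y ≤ g x → g y + t * φ y < g x + t * φ x :=
    fun y hy hyx hgy => by nlinarith [hφ y hy hyx]
  have hle : ∀ y ∈ S, g y + t * φ y ≤ g x + t * φ x := by
    intro y hy
    rcases eq_or_ne y x with rfl | hyx
    · rfl
    rcases le_or_gt (g y) (g x) with hgy | hgy
    · exact (hlt y hy hyx hgy).le
    · have := (div_le_iff₀ (sub_pos.2 (hφ y hy hyx))).1 (hmax y ⟨hy, hgy⟩)
      linarith
  refine ⟨g + t • φ, ?_, ⟨y₀, hy₀, ?_, hgy₀⟩, ?_⟩ <;>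
    simp only [add_apply, FunLike.coe_smul, Pi.smul_apply, smul_eq_mul]
  · exact hle
  · have := div_mul_cancel₀ (g y₀ - g x) hφy₀.ne'
    linarith
  · intro y hy hyx heq
    by_contra! hgy
    exact (hlt y hy hyx hgy).ne heq

-- Either the first tilt already exposes a proper face, or every other vertex is `g`-better than
-- `x`, and a second tilt, towards a functional separating two other vertices across `x`, does.
theorem exists_proper_tilt {A S : Set E} (hS : S.Finite) (hSA : S ⊆ A.extremePoints ℝ)
    {x y z : E} (hx : x ∈ A) {φ g : StrongDual ℝ E} (hφ : ∀ w ∈ S, w ≠ x → φ w < φ x)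
    (hy : y ∈ S) (hgy : g x < g y) (hz : z ∈ S) (hzx : z ≠ x) (hzy : z ≠ y) :
    ∃ f g' : StrongDual ℝ E, (∀ w ∈ S, f w ≤ f x) ∧ (∃ w ∈ S, f w < f x) ∧
      (∃ w ∈ S, f w = f x ∧ g' x < g' w) ∧ ∀ w ∈ S, g' x < g' w → g x < g w := by
  obtain ⟨f, hfS, htie, himp⟩ := exists_tilt hS hφ ⟨y, hy, hgy⟩
  by_cases hproper : ∃ w ∈ S, f w < f x
  · exact ⟨f, g, hfS, hproper, htie, fun _ _ => id⟩
  push Not at hproper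
  have hyx : y ≠ x := by rintro rfl; exact hgy.false
  obtain ⟨h, hhy, hhz⟩ :=
    exists_lt_lt_of_mem_extremePoints hx (hSA hy) (hSA hz) hyx hzx hzy.symm
  obtain ⟨f', hf'S, htie', himp'⟩ := exists_tilt hS hφ ⟨y, hy, hhy⟩
  refine ⟨f', h, hf'S, ⟨z, hz, (hf'S z hz).lt_of_ne fun hfz => (himp' z hz hzx hfz).asymm hhz⟩,
    htie', fun w hw hhw => ?_⟩
  have hwx : w ≠ x := by rintro rfl; exact hhw.false
  exact himp w hw hwx (le_antisymm (hfS w hw) (hproper w hw))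

theorem exists_improving_edge {K : Set E} (hK : IsCompact K) (hKc : Convex ℝ K)
    (hfin : (K.extremePoints ℝ).Finite) {x : E} (hx : x ∈ K.extremePoints ℝ)
    {g : StrongDual ℝ E} (hg : ∃ p ∈ K, g x < g p) :
    ∃ u ∈ K.extremePoints ℝ, g x < g u ∧ IsExtreme ℝ K (segment ℝ x u) := by
  induction hN : (K.extremePoints ℝ).ncard using Nat.strong_induction_on generalizing K x g with
  | _ N ih =>
  have hle (f : StrongDual ℝ E) (hf : ∀ y ∈ K.extremePoints ℝ, f y ≤ f x) : ∀ p ∈ K, f p ≤ f x :=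
    fun p hp => ((f : E →ₗ[ℝ] ℝ).convexOn hKc).le_of_forall_extremePoints_le hK hKc hfin hf hp
  obtain ⟨y, hy, hgy⟩ : ∃ y ∈ K.extremePoints ℝ, g x < g y := by
    by_contra! h
    obtain ⟨p, hp, hgp⟩ := hg
    exact hgp.not_ge (hle g h p hp)
  by_cases hthird : ∃ z ∈ K.extremePoints ℝ, z ≠ x ∧ z ≠ y
  · obtain ⟨z, hz, hzx, hzy⟩ := hthird
    obtain ⟨φ, hφ⟩ := exists_forall_lt_of_mem_extremePoints hKc hfin extremePoints_subset hx
    obtain ⟨f, g', hfW, ⟨y₀, hy₀, hfy₀⟩, ⟨y', hy', hfy', hg'y'⟩, hg'g⟩ :=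
      exists_proper_tilt hfin subset_rfl hx.1 hφ hy hgy hz hzx hzy
    have hF : IsExposed ℝ K (f.toExposed K) := ContinuousLinearMap.toExposed.isExposed
    have hmemF (p : E) (hp : p ∈ K) (hfp : f x ≤ f p) : p ∈ f.toExposed K :=
      ⟨hp, fun q hq => (hle f hfW q hq).trans hfp⟩
    have hFW : (f.toExposed K).extremePoints ℝ ⊂ K.extremePoints ℝ := by
      rw [hF.isExtreme.extremePoints_eq]
      exact (Set.ssubset_iff_of_subset Set.inter_subset_right).2
        ⟨y₀, hy₀, fun h => (h.1.2 x hx.1).not_gt hfy₀⟩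
    obtain ⟨u, hu, hg'u, hseg⟩ := ih _ (hN ▸ Set.ncard_lt_ncard hFW hfin) (hF.isCompact hK)
      (hF.convex hKc) (hfin.subset hFW.subset)
      (by rw [hF.isExtreme.extremePoints_eq]; exact ⟨hmemF x hx.1 le_rfl, hx⟩)
      ⟨y', hmemF y' hy'.1 hfy'.ge, hg'y'⟩ rfl
    exact ⟨u, hFW.subset hu, hg'g u (hFW.subset hu) hg'u, hF.isExtreme.trans hseg⟩
  · push Not at hthird
    have hW : K.extremePoints ℝ = {x, y} := Set.Subset.antisymm
      (fun z hz => or_iff_not_imp_left.2 fun hzx => hthird z hz hzx)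
      (Set.insert_subset hx (Set.singleton_subset_iff.2 hy))
    have hKxy : K = segment ℝ x y := by
      rw [← convexHull_pair, ← hW, convexHull_extremePoints_of_finite hK hKc hfin]
    exact ⟨y, hy, hgy, hKxy ▸ IsExtreme.refl ℝ _⟩

end Polytope

section Shadow

variable {n : ℕ} {Q : Set (Fin n → ℝ)} {c v w x u : Fin n → ℝ}

theorem dotR_sub (w a b : Fin n → ℝ) : dotR w (a - b) = dotR w a - dotR w b :=
  dotProduct_sub w a b

theorem sub_smul_dotR (c v z : Fin n → ℝ) (t : ℝ) :
    dotR (c - t • v) z = dotR c z - t * dotR v z := by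
  simp only [dotR, ← dotProduct.eq_def, sub_dotProduct, smul_dotProduct, smul_eq_mul]

theorem IsPolytope.isCompact (hQ : IsPolytope Q) : IsCompact Q := by
  obtain ⟨V, -, rfl⟩ := hQ
  exact V.finite_toSet.isCompact_convexHull ℝ

theorem IsPolytope.convex (hQ : IsPolytope Q) : Convex ℝ Q := by
  obtain ⟨V, -, rfl⟩ := hQ
  exact convex_convexHull ℝ _

theorem IsPolytope.finite_extremePoints (hQ : IsPolytope Q) : (Q.extremePoints ℝ).Finite := by
  obtain ⟨V, -, rfl⟩ := hQ
  exact V.finite_toSet.subset extremePoints_convexHull_subset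

theorem exists_impNbr_of_not_isMaxOn (hQ : IsPolytope Q) (hx : IsVertex Q x)
    (h : ¬IsMaxOn (dotR w) Q x) : ∃ u, ImpNbr Q w x u := by
  obtain ⟨p, hp, hwp⟩ : ∃ p ∈ Q, dotR w x < dotR w p := by simpa [isMaxOn_iff] using h
  obtain ⟨u, hu, hwu, hseg⟩ := exists_improving_edge hQ.isCompact hQ.convex
    hQ.finite_extremePoints hx (g := LinearMap.toContinuousLinearMap (dotProductBilin ℝ ℝ w))
    ⟨p, hp, hwp⟩
  exact ⟨u, ⟨hx, hu, ne_of_apply_ne _ hwu.ne, hseg⟩, hwu⟩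

theorem ImpNbr.div_le_iff {P : Set (Fin n → ℝ)} (hu : ImpNbr P v x u) {t : ℝ} :
    dotR c (u - x) / dotR v (u - x) ≤ t ↔ dotR (c - t • v) u ≤ dotR (c - t • v) x := by
  have hv : 0 < dotR v (u - x) := by rw [dotR_sub]; linarith [hu.2]
  rw [div_le_iff₀ hv, dotR_sub, dotR_sub, sub_smul_dotR, sub_smul_dotR]
  constructor <;> intro <;> linarith

theorem isMaxOn_of_forall_impNbr_le (hQ : IsPolytope Q) (hx : IsVertex Q x) {s t : ℝ}
    (hs : IsMaxOn (dotR (c - s • v)) Q x) (hts : t ≤ s)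
    (h : ∀ u, ImpNbr Q v x u → dotR (c - t • v) u ≤ dotR (c - t • v) x) :
    IsMaxOn (dotR (c - t • v)) Q x := by
  rcases hts.eq_or_lt with rfl | hts
  · exact hs
  refine isMaxOn_iff.2 fun z hz => not_lt.1 fun hzx => ?_
  have hsz := isMaxOn_iff.1 hs z hz
  simp only [sub_smul_dotR] at hzx hsz
  have hm : 0 < dotR v z - dotR v x := by nlinarith
  obtain ⟨t', htt', ht'⟩ := exists_between (lt_min hts
    ((lt_div_iff₀ hm).2 (by linarith) : t < (dotR c z - dotR c x) / (dotR v z - dotR v x)))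
  have hzx' : t' * (dotR v z - dotR v x) < dotR c z - dotR c x :=
    (lt_div_iff₀ hm).1 (ht'.trans_le (min_le_right _ _))
  obtain ⟨u, hu, hwu⟩ := exists_impNbr_of_not_isMaxOn (w := c - t' • v) hQ hx fun hmax => by
    have := isMaxOn_iff.1 hmax z hz
    simp only [sub_smul_dotR] at this
    linarith
  have hsu := isMaxOn_iff.1 hs u (extremePoints_subset hu.2.1)
  have ht's : 0 < s - t' := sub_pos.2 (ht'.trans_le (min_le_left _ _))
  simp only [sub_smul_dotR] at hwu hsu
  have hvu : dotR v x < dotR v u := by nlinarith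
  have := h u ⟨hu, hvu⟩
  simp only [sub_smul_dotR] at this
  nlinarith

theorem exists_isMaxOn_of_isMinOn (hQ : IsPolytope Q) (hmin : ∀ z ∈ Q, dotR v x ≤ dotR v z)
    (hmaxF : ∀ y ∈ Q, (∀ z ∈ Q, dotR v y ≤ dotR v z) → dotR c y ≤ dotR c x) :
    ∃ s : ℝ, 0 ≤ s ∧ IsMaxOn (dotR (c - s • v)) Q x := by
  obtain ⟨s, hs⟩ := (hQ.finite_extremePoints.image
    fun z => (dotR c z - dotR c x) / (dotR v z - dotR v x)).bddAbove
  set s' : ℝ := max s 0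
  refine ⟨s', le_max_right _ _, isMaxOn_iff.2 fun p hp =>
    ((dotProductBilin ℝ ℝ (c - s' • v)).convexOn hQ.convex).le_of_forall_extremePoints_le
      hQ.isCompact hQ.convex hQ.finite_extremePoints (fun z hz => ?_) hp⟩
  change dotR (c - s' • v) z ≤ dotR (c - s' • v) x
  rw [sub_smul_dotR, sub_smul_dotR]
  rcases (hmin z hz.1).lt_or_eq with hlt | heq
  · have hratio := (div_le_iff₀ (sub_pos.2 hlt)).1
      ((hs ⟨z, hz, rfl⟩).trans (le_max_left s 0))
    linarith
  · have := hmaxF z hz.1 fun y hy => heq ▸ hmin y hy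
    rw [heq]
    linarith

theorem isMaxOn_of_shadow_step (hQ : IsPolytope Q) (hx : IsVertex Q x) {s : ℝ}
    (hs : IsMaxOn (dotR (c - s • v)) Q x) (hu : ImpNbr Q v x u)
    (hbest : ∀ u', ImpNbr Q v x u' →
      dotR c (u' - x) / dotR v (u' - x) ≤ dotR c (u - x) / dotR v (u - x)) :
    IsMaxOn (dotR (c - (dotR c (u - x) / dotR v (u - x)) • v)) Q u := by
  set t := dotR c (u - x) / dotR v (u - x)
  have hts : t ≤ s := hu.div_le_iff.2 (isMaxOn_iff.1 hs u (extremePoints_subset hu.1.2.1))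
  have hxt := isMaxOn_of_forall_impNbr_le hQ hx hs hts fun u' hu' => hu'.div_le_iff.1 (hbest u' hu')
  have hux : dotR (c - t • v) u = dotR (c - t • v) x := by
    have hv : dotR v (u - x) ≠ 0 := by rw [dotR_sub]; linarith [hu.2]
    have : t * dotR v (u - x) = dotR c (u - x) := div_mul_cancel₀ _ hv
    rw [dotR_sub, dotR_sub] at this
    rw [sub_smul_dotR, sub_smul_dotR]
    linarith
  exact isMaxOn_iff.2 fun z hz => hux ▸ isMaxOn_iff.1 hxt z hz

theorem ShadowPath.exists_isMaxOn {k : ℕ} {x : ℕ → Fin n → ℝ} (hpath : ShadowPath Q c v k x)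
    (hQ : IsPolytope Q) (hmin : ∀ z ∈ Q, dotR v (x 0) ≤ dotR v z)
    (hmaxF : ∀ y ∈ Q, (∀ z ∈ Q, dotR v y ≤ dotR v z) → dotR c y ≤ dotR c (x 0)) {i : ℕ}
    (hi : i ≤ k) (hmono : ∀ j < i, dotR c (x j) < dotR c (x (j + 1))) :
    ∃ s : ℝ, 0 ≤ s ∧ IsMaxOn (dotR (c - s • v)) Q (x i) := by
  induction i with
  | zero => exact exists_isMaxOn_of_isMinOn hQ hmin hmaxF
  | succ i ih =>
    obtain ⟨s, -, hs⟩ := ih (by omega) fun j hj => hmono j (by omega)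
    obtain ⟨hstep, hbest⟩ := hpath.2.1 i (by omega)
    refine ⟨dotR c (x (i + 1) - x i) / dotR v (x (i + 1) - x i), div_nonneg ?_ ?_,
      isMaxOn_of_shadow_step hQ (hpath.1 i (by omega)) hs hstep hbest⟩ <;> rw [dotR_sub]
    · linarith [hmono i (by omega)]
    · linarith [hstep.2]

theorem ShadowPath.dotR_le_of_impNbr {k : ℕ} {x : ℕ → Fin n → ℝ} (hpath : ShadowPath Q c v k x)
    {i : ℕ} (hi : i ≤ k) (hend : i = k ∨ ¬dotR c (x i) < dotR c (x (i + 1)))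
    (hu : ImpNbr Q v (x i) u) :
    dotR c u ≤ dotR c (x i) := by
  rcases hi.eq_or_lt with rfl | hik
  · exact (hpath.2.2 u hu).elim
  obtain ⟨hstep, hbest⟩ := hpath.2.1 i hik
  have hstep0 := hstep.div_le_iff (c := c) (t := 0)
  have hu0 := hu.div_le_iff (c := c) (t := 0)
  simp only [zero_smul, sub_zero] at hstep0 hu0
  exact hu0.1 ((hbest u hu).trans (hstep0.2 (not_lt.1 (hend.resolve_left hik.ne))))

end Shadow

theorem shadow_path_reaches_c_max_general {n : ℕ} (Q : Set (Fin n → ℝ)) (hQ : IsPolytope Q)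
    (c v : Fin n → ℝ) (k : ℕ) (x : ℕ → Fin n → ℝ)
    (hpath : ShadowPath Q c v k x)
    (hmin : ∀ z ∈ Q, dotR v (x 0) ≤ dotR v z)
    (hmaxF : ∀ y ∈ Q, (∀ z ∈ Q, dotR v y ≤ dotR v z) → dotR c y ≤ dotR c (x 0)) :
    ∃ i ≤ k, (∀ y ∈ Q, dotR c y ≤ dotR c (x i)) ∧
      ∀ j < i, dotR c (x j) < dotR c (x (j + 1)) := by
  have hend : ∃ i, i = k ∨ ¬dotR c (x i) < dotR c (x (i + 1)) := ⟨k, Or.inl rfl⟩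
  set i := Nat.find hend
  have hik : i ≤ k := Nat.find_min' hend (Or.inl rfl)
  have hmono : ∀ j < i, dotR c (x j) < dotR c (x (j + 1)) :=
    fun j hj => not_not.1 (not_or.1 (Nat.find_min hend hj)).2
  obtain ⟨s, hs0, hs⟩ := hpath.exists_isMaxOn hQ hmin hmaxF hik hmono
  have hmax := isMaxOn_of_forall_impNbr_le hQ (hpath.1 i hik) hs hs0 (t := 0) fun u hu => by
    simpa using hpath.dotR_le_of_impNbr hik (Nat.find_spec hend) hu
  simp only [zero_smul, sub_zero] at hmax
  exact ⟨i, hik, isMaxOn_iff.1 hmax, hmono⟩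

/-- Lemma 3.2 (submaximum lemma): a `c`-coherent `v`-monotone (Shadow-rule) path whose
start maximizes `c` on the `v`-minimal face passes through a `c`-maximum of `Q`, and
the initial segment up to it is strictly `c`-monotone (it is strictly `v`-monotone
by definition of the path). -/
theorem shadow_path_reaches_c_max {n : ℕ} (Q : Set (Fin n → ℝ)) (hQ : IsPolytope Q)
    (c v : Fin n → ℝ) (hv : v ≠ 0) (k : ℕ) (x : ℕ → Fin n → ℝ)
    (hpath : ShadowPath Q c v k x)
    (hmin : ∀ z ∈ Q, dotR v (x 0) ≤ dotR v z)
    (hmaxF : ∀ y ∈ Q, (∀ z ∈ Q, dotR v y ≤ dotR v z) → dotR c y ≤ dotR c (x 0)) :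
    ∃ i ≤ k, (∀ y ∈ Q, dotR c y ≤ dotR c (x i)) ∧
      ∀ j < i, dotR c (x j) < dotR c (x (j + 1)) :=
  shadow_path_reaches_c_max_general Q hQ c v k x hpath hmin hmaxF
end
end

section
/- Let P ⊆ ℝ^n be a 0/1 polytope in which every vertex has exactly M coordinates equal to 1, let x^0 be a vertex of P, let c ∈ ℝ^n, and set v = 1 − 2x^0. Then every Shadow-rule path on P with auxiliary vector v and objective c starting at x^0 has length at most M and contains a vertex maximizing ⟨c,·⟩ over P. -/
open Finset

attribute [local instance] Classical.propDecidable

noncomputable section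

/-!
For `v = 1 - 2 x0` a vertex `u` has `⟨v, u⟩ = M - 2 #(supp x0 ∩ supp u)`. So `x0` is the unique
`v`-minimal vertex, and every `v`-improving step strictly lowers the overlap
`#(supp x0 ∩ supp u)`, which starts at `M`.

Optimality is the shadow-vertex argument. With `λᵢ` the slope of the `i`-th step, `xᵢ` maximizes
`⟨c - λᵢ v, ·⟩` over `P`, by induction: the slopes decrease, and a vertex with no better
neighbour is a global maximizer. The first vertex whose outgoing slope is `≤ 0`, or else the last
vertex, then maximizes `⟨c, ·⟩`. For the local-to-global step, tilt a hyperplane exposing the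
vertex `x` towards the objective: a minimal face through `x` whose other points all improve the
objective is an edge.
-/

section Polytope

variable {E : Type*} [NormedAddCommGroup E] [NormedSpace ℝ E] {S V : Finset E} {x : E}

theorem Finset.exists_dual_lt_of_mem_extremePoints
    (hx : x ∈ (convexHull ℝ (S : Set E)).extremePoints ℝ) :
    ∃ a : StrongDual ℝ E, ∀ y ∈ S.erase x, a y < a x := by
  have hxS : x ∉ convexHull ℝ ((S.erase x : Finset E) : Set E) := by
    rw [(convex_convexHull ℝ _).mem_extremePoints_iff_mem_sdiff_convexHull_sdiff] at hx
    refine fun hmem => hx.2 (convexHull_mono (fun y hy => ?_) hmem)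
    obtain ⟨hyx, hyS⟩ := mem_erase.1 hy
    exact ⟨subset_convexHull ℝ _ hyS, hyx⟩
  obtain ⟨a, r, ha, hr⟩ := geometric_hahn_banach_closed_point (convex_convexHull ℝ _)
    ((S.erase x).finite_toSet.isCompact_convexHull ℝ).isClosed hxS
  exact ⟨a, fun y hy => (ha y (subset_convexHull ℝ _ hy)).trans hr⟩

theorem Finset.convexHull_erase_eq {y : E} (hy : y ∈ convexHull ℝ (S.erase y : Set E)) :
    convexHull ℝ (S.erase y : Set E) = convexHull ℝ (S : Set E) := by
  refine (convexHull_mono (erase_subset _ _)).antisymm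
    (convexHull_min (fun z hz => ?_) (convex_convexHull ℝ _))
  rcases eq_or_ne z y with rfl | hzy
  · exact hy
  · exact subset_convexHull ℝ _ (mem_erase.2 ⟨hzy, hz⟩)

theorem StrongDual.le_of_mem_convexHull (f : StrongDual ℝ E) {B : ℝ} (hB : ∀ y ∈ S, f y ≤ B)
    {p : E} (hp : p ∈ convexHull ℝ (S : Set E)) : f p ≤ B :=
  convexHull_min hB (convex_halfSpace_le f.toLinearMap.isLinear B) hp

theorem StrongDual.mem_convexHull_filter_of_apply_eq (f : StrongDual ℝ E) {B : ℝ}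
    (hB : ∀ y ∈ S, f y ≤ B) {p : E} (hp : p ∈ convexHull ℝ (S : Set E)) (hpB : f p = B) :
    p ∈ convexHull ℝ (S.filter fun y => f y = B : Set E) := by
  obtain ⟨μ, hμ0, hμ1, rfl⟩ := mem_convexHull'.1 hp
  have hsum : ∑ y ∈ S, μ y * (B - f y) = 0 := by
    simp only [mul_sub, sum_sub_distrib, ← sum_mul, hμ1, one_mul, ← hpB, map_sum, map_smul,
      smul_eq_mul, sub_self]
  have hvanish : ∀ y ∈ S, μ y ≠ 0 → f y = B := fun y hy hμy => by
    have := (sum_eq_zero_iff_of_nonneg fun y hy =>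
      mul_nonneg (hμ0 y hy) (sub_nonneg.2 (hB y hy))).1 hsum y hy
    linarith [(mul_eq_zero.1 this).resolve_left hμy]
  refine mem_convexHull'.2 ⟨μ, fun y hy => hμ0 y (mem_filter.1 hy).1, ?_, ?_⟩
  · rwa [sum_filter_of_ne hvanish]
  · exact sum_filter_of_ne fun y hy hne => hvanish y hy (left_ne_zero_of_smul hne)

theorem isExtreme_convexHull_filter_eq (f : StrongDual ℝ E) (hx : x ∈ S)
    (hmax : ∀ y ∈ S, f y ≤ f x) :
    IsExtreme ℝ (convexHull ℝ (S : Set E))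
      (convexHull ℝ (S.filter fun y => f y = f x : Set E)) := by
  have hface : convexHull ℝ (S.filter fun y => f y = f x : Set E) =
      f.toExposed (convexHull ℝ (S : Set E)) := by
    ext p
    constructor
    · intro hp
      have hpx : f p = f x := convexHull_min (fun y hy => (mem_filter.1 hy).2)
        (convex_hyperplane f.toLinearMap.isLinear _) hp
      exact ⟨convexHull_mono (filter_subset _ _) hp,
        fun y hy => hpx ▸ f.le_of_mem_convexHull hmax hy⟩
    · rintro ⟨hp, hpmax⟩
      exact f.mem_convexHull_filter_of_apply_eq hmax hp
        (le_antisymm (f.le_of_mem_convexHull hmax hp) (hpmax x (subset_convexHull ℝ _ hx)))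
  exact hface ▸ ContinuousLinearMap.toExposed.isExposed.isExtreme

/-- Tilt the functional `a` exposing `x` towards `h` as far as `x` stays maximal; the face it then
exposes contains a point other than `x`. -/
theorem exists_face_rotate (a h : StrongDual ℝ E) (hx : x ∈ S) (hS : (S.erase x).Nonempty)
    (ha : ∀ y ∈ S.erase x, a y < a x) :
    ∃ σ : ℝ, (∀ y ∈ S, h y - h x ≤ σ * (a x - a y)) ∧ ∃ T ⊆ S, x ∈ T ∧
      IsExtreme ℝ (convexHull ℝ (S : Set E)) (convexHull ℝ (T : Set E)) ∧ (T.erase x).Nonempty ∧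
      ∀ y ∈ T, h y - h x = σ * (a x - a y) := by
  obtain ⟨y₀, hy₀, hmax⟩ := (S.erase x).exists_max_image (fun y => (h y - h x) / (a x - a y)) hS
  set σ := (h y₀ - h x) / (a x - a y₀)
  have hle : ∀ y ∈ S, h y - h x ≤ σ * (a x - a y) := by
    intro y hy
    rcases eq_or_ne y x with rfl | hyx
    · simp
    · exact (div_le_iff₀ (sub_pos.2 (ha y (mem_erase.2 ⟨hyx, hy⟩)))).1
        (hmax y (mem_erase.2 ⟨hyx, hy⟩))
  set g := h + σ • a
  have hg_apply : ∀ y, g y = h y + σ * a y := fun y => rfl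
  have hg : ∀ y, g y = g x ↔ h y - h x = σ * (a x - a y) := fun y => by
    rw [hg_apply, hg_apply]
    constructor <;> intro _ <;> linarith
  refine ⟨σ, hle, S.filter fun y => g y = g x, filter_subset _ _, mem_filter.2 ⟨hx, rfl⟩,
    isExtreme_convexHull_filter_eq g hx fun y hy => ?_, ⟨y₀, ?_⟩,
    fun y hy => (hg y).1 (mem_filter.1 hy).2⟩
  · rw [hg_apply, hg_apply]
    linarith [hle y hy]
  · obtain ⟨hy₀x, hy₀S⟩ := mem_erase.1 hy₀
    refine mem_erase.2 ⟨hy₀x, mem_filter.2 ⟨hy₀S, (hg y₀).2 ?_⟩⟩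
    exact (div_mul_cancel₀ _ (sub_pos.2 (ha y₀ hy₀)).ne').symm

theorem exists_face_forall_lt (a w : StrongDual ℝ E) (hx : x ∈ S)
    (ha : ∀ y ∈ S.erase x, a y < a x) {z : E} (hz : z ∈ S) (hwz : w x < w z) :
    ∃ T ⊆ S, x ∈ T ∧ IsExtreme ℝ (convexHull ℝ (S : Set E)) (convexHull ℝ (T : Set E)) ∧
      (T.erase x).Nonempty ∧ ∀ y ∈ T.erase x, w x < w y := by
  have hz' : z ∈ S.erase x := mem_erase.2 ⟨by rintro rfl; exact hwz.false, hz⟩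
  obtain ⟨σ, hle, T, hTS, hxT, hext, hTne, hT⟩ := exists_face_rotate a w hx ⟨z, hz'⟩ ha
  have hσ : 0 < σ := pos_of_mul_pos_left ((sub_pos.2 hwz).trans_le (hle z hz))
    (sub_pos.2 (ha z hz')).le
  refine ⟨T, hTS, hxT, hext, hTne, fun y hy => ?_⟩
  obtain ⟨hyx, hyT⟩ := mem_erase.1 hy
  have hay := sub_pos.2 (ha y (mem_erase.2 ⟨hyx, hTS hyT⟩))
  linarith [hT y hyT, mul_pos hσ hay]

theorem exists_ssubset_face (a : StrongDual ℝ E) (hx : x ∈ S)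
    (ha : ∀ y ∈ S.erase x, a y < a x) {y₁ y₂ : E} (hy₁ : y₁ ∈ S.erase x) (hy₂ : y₂ ∈ S.erase x)
    (hne : y₁ ≠ y₂) :
    ∃ T ⊂ S, x ∈ T ∧ IsExtreme ℝ (convexHull ℝ (S : Set E)) (convexHull ℝ (T : Set E)) ∧
      (T.erase x).Nonempty := by
  -- On the face obtained by tilting towards `h`, `h ∘ d` is constant off `x`. So if `d y₁ ≠ d y₂`,
  -- tilting towards a functional separating them gives a proper face; if `d y₁ = d y₂`, the points
  -- `x, y₁, y₂` are collinear and the middle one can be dropped without changing the hull.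
  set d : E → E := fun y => (a x - a y)⁻¹ • (y - x)
  by_cases hd : d y₁ = d y₂
  · wlog hle : a y₂ ≤ a y₁ generalizing y₁ y₂
    · exact this hy₂ hy₁ hne.symm hd.symm (le_of_not_ge hle)
    have hpos₁ : 0 < a x - a y₁ := sub_pos.2 (ha _ hy₁)
    have hpos₂ : 0 < a x - a y₂ := sub_pos.2 (ha _ hy₂)
    have hy₁seg : y₁ ∈ segment ℝ x y₂ := by
      rw [segment_eq_image']
      refine ⟨(a x - a y₁) / (a x - a y₂),
        ⟨div_nonneg hpos₁.le hpos₂.le, (div_le_one hpos₂).2 (by linarith)⟩, ?_⟩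
      have := congrArg ((a x - a y₁) • ·) hd
      simp only [d, smul_smul, mul_inv_cancel₀ hpos₁.ne', one_smul] at this
      simp only [div_eq_mul_inv, ← this, add_sub_cancel]
    have hxT : x ∈ S.erase y₁ := mem_erase.2 ⟨(ne_of_mem_erase hy₁).symm, hx⟩
    have hy₂T : y₂ ∈ S.erase y₁ := mem_erase.2 ⟨hne.symm, mem_of_mem_erase hy₂⟩
    have hconv := convexHull_erase_eq (segment_subset_convexHull hxT hy₂T hy₁seg)
    exact ⟨S.erase y₁, erase_ssubset (mem_of_mem_erase hy₁), hxT, hconv ▸ IsExtreme.rfl,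
      ⟨y₂, mem_erase.2 ⟨ne_of_mem_erase hy₂, hy₂T⟩⟩⟩
  · obtain ⟨h, hh⟩ := SeparatingDual.exists_separating_of_ne (R := ℝ) hd
    obtain ⟨σ, -, T, hTS, hxT, hext, hTne, hT⟩ := exists_face_rotate a h hx ⟨y₁, hy₁⟩ ha
    have hhd : ∀ y ∈ S.erase x, y ∈ T → h (d y) = σ := fun y hy hyT => by
      simp only [d, map_smul, map_sub, smul_eq_mul, hT y hyT]
      field_simp [(sub_pos.2 (ha y hy)).ne']
    refine ⟨T, ssubset_of_subset_of_ne hTS ?_, hxT, hext, hTne⟩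
    rintro rfl
    exact hh ((hhd y₁ hy₁ (mem_of_mem_erase hy₁)).trans (hhd y₂ hy₂ (mem_of_mem_erase hy₂)).symm)

theorem exists_adjacent_lt (w : StrongDual ℝ E)
    (hx : x ∈ (convexHull ℝ (V : Set E)).extremePoints ℝ) {z : E} (hz : z ∈ V) (hwz : w x < w z) :
    ∃ u ∈ (convexHull ℝ (V : Set E)).extremePoints ℝ, u ≠ x ∧
      IsExtreme ℝ (convexHull ℝ (V : Set E)) (segment ℝ x u) ∧ w x < w u := by
  have hxV : x ∈ V := by exact_mod_cast extremePoints_convexHull_subset hx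
  obtain ⟨a, ha⟩ := V.exists_dual_lt_of_mem_extremePoints hx
  let Good : Finset E → Prop := fun T => x ∈ T ∧
    IsExtreme ℝ (convexHull ℝ (V : Set E)) (convexHull ℝ (T : Set E)) ∧
    (T.erase x).Nonempty ∧ ∀ y ∈ T.erase x, w x < w y
  obtain ⟨T₀, hT₀V, hT₀⟩ : ∃ T ⊆ V, Good T := exists_face_forall_lt a w hxV ha hz hwz
  obtain ⟨T, hT, hmin⟩ := (V.powerset.filter Good).exists_min_image card
    ⟨T₀, mem_filter.2 ⟨mem_powerset.2 hT₀V, hT₀⟩⟩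
  obtain ⟨hTV, hxT, hext, ⟨u, hu⟩, himp⟩ : T ⊆ V ∧ Good T := by
    simpa only [mem_filter, mem_powerset] using hT
  have haT : ∀ y ∈ T.erase x, a y < a x := fun y hy => ha y (erase_subset_erase x hTV hy)
  have hTu : T.erase x = {u} := by
    refine eq_singleton_iff_unique_mem.2 ⟨hu, fun y hy => by_contra fun hyu => ?_⟩
    obtain ⟨T', hT'T, hxT', hext', hT'ne⟩ := exists_ssubset_face a hxT haT hy hu hyu
    have hT'good : T' ∈ V.powerset.filter Good := mem_filter.2 ⟨mem_powerset.2
      (hT'T.subset.trans hTV), hxT', hext.trans hext', hT'ne,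
      fun y hy => himp y (erase_subset_erase x hT'T.subset hy)⟩
    exact (card_lt_card hT'T).not_ge (hmin T' hT'good)
  have hTeq : T = {x, u} := by rw [← insert_erase hxT, hTu]
  have hux : u ≠ x := ne_of_mem_erase hu
  have hau : a u < a x := haT u hu
  have hu_ext : u ∈ (convexHull ℝ (T : Set E)).extremePoints ℝ := by
    have hface := isExtreme_convexHull_filter_eq (-a) (mem_of_mem_erase hu) fun y hy => by
      rw [hTeq, mem_insert, mem_singleton] at hy
      rcases hy with rfl | rfl <;> simp [hau.le]
    have hfilter : (T.filter fun y => (-a) y = (-a) u) = {u} := by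
      simp [hTeq, filter_insert, hau.ne']
    rwa [hfilter, coe_singleton, convexHull_singleton, isExtreme_singleton] at hface
  refine ⟨u, hext.extremePoints_subset_extremePoints hu_ext, hux, ?_, himp u hu⟩
  rwa [hTeq, coe_pair, convexHull_pair] at hext

theorem le_of_forall_adjacent_le (w : StrongDual ℝ E)
    (hx : x ∈ (convexHull ℝ (V : Set E)).extremePoints ℝ)
    (h : ∀ u ∈ (convexHull ℝ (V : Set E)).extremePoints ℝ, u ≠ x →
      IsExtreme ℝ (convexHull ℝ (V : Set E)) (segment ℝ x u) → w u ≤ w x)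
    {y : E} (hy : y ∈ convexHull ℝ (V : Set E)) : w y ≤ w x := by
  by_contra! hlt
  obtain ⟨z, hz, hwz⟩ : ∃ z ∈ V, w x < w z := by
    by_contra! hle
    exact hlt.not_ge (w.le_of_mem_convexHull hle hy)
  obtain ⟨u, hu, hux, hseg, hwu⟩ := exists_adjacent_lt w hx hz hwz
  exact hwu.not_ge (h u hu hux hseg)

end Polytope

section DotR

variable {n : ℕ}

theorem dotR_eq_dotProduct (c x : Fin n → ℝ) : dotR c x = c ⬝ᵥ x := rfl

theorem dotR_sub_right (w y z : Fin n → ℝ) : dotR w (y - z) = dotR w y - dotR w z :=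
  dotProduct_sub w y z

def dotRDual (w : Fin n → ℝ) : StrongDual ℝ (Fin n → ℝ) :=
  LinearMap.toContinuousLinearMap (dotProductBilin ℝ ℝ w)

@[simp]
theorem dotRDual_apply (w y : Fin n → ℝ) : dotRDual w y = dotR w y := rfl

theorem IsPolytope.dotR_le_of_forall_adjacent {P : Set (Fin n → ℝ)} (hP : IsPolytope P)
    {w x : Fin n → ℝ} (hx : IsVertex P x) (h : ∀ u, Adjacent P x u → dotR w u ≤ dotR w x)
    {y : Fin n → ℝ} (hy : y ∈ P) : dotR w y ≤ dotR w x := by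
  obtain ⟨V, -, rfl⟩ := hP
  exact le_of_forall_adjacent_le (dotRDual w) hx
    (fun u hu hux hseg => h u ⟨hx, hu, hux.symm, hseg⟩) hy

end DotR

section Shadow

variable {n : ℕ} {P : Set (Fin n → ℝ)} {c v : Fin n → ℝ}

/-- `p` maximizes `⟨c - t • v, ·⟩` over `P`. -/
def IsTiltedMax (P : Set (Fin n → ℝ)) (c v : Fin n → ℝ) (t : ℝ) (p : Fin n → ℝ) : Prop :=
  ∀ y ∈ P, dotR c y - dotR c p ≤ t * (dotR v y - dotR v p)

theorem IsPolytope.isTiltedMax_of_forall_adjacent (hP : IsPolytope P) {p : Fin n → ℝ}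
    (hp : IsVertex P p) {t : ℝ}
    (h : ∀ u, Adjacent P p u → dotR c u - dotR c p ≤ t * (dotR v u - dotR v p)) :
    IsTiltedMax P c v t p := by
  intro y hy
  have htilt : ∀ z, dotR (c - t • v) z = dotR c z - t * dotR v z := fun z => by
    simp [dotR_eq_dotProduct, sub_dotProduct]
  have := hP.dotR_le_of_forall_adjacent hp (w := c - t • v) (fun u hu => by
    rw [htilt, htilt]; linarith [h u hu]) hy
  rw [htilt, htilt] at this
  linarith

def shadowSlope (c v : Fin n → ℝ) (x : ℕ → Fin n → ℝ) (i : ℕ) : ℝ :=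
  dotR c (x (i + 1) - x i) / dotR v (x (i + 1) - x i)

namespace ShadowPath

variable {k : ℕ} {x : ℕ → Fin n → ℝ} (hpath : ShadowPath P c v k x)
include hpath

theorem isVertex {i : ℕ} (hi : i ≤ k) : IsVertex P (x i) := hpath.1 i hi

theorem dotR_lt {i : ℕ} (hi : i < k) : dotR v (x i) < dotR v (x (i + 1)) := (hpath.2.1 i hi).1.2

theorem sub_eq_shadowSlope_mul {i : ℕ} (hi : i < k) :
    dotR c (x (i + 1)) - dotR c (x i) =
      shadowSlope c v x i * (dotR v (x (i + 1)) - dotR v (x i)) := by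
  rw [shadowSlope, dotR_sub_right, dotR_sub_right,
    div_mul_cancel₀ _ (sub_pos.2 (hpath.dotR_lt hi)).ne']

theorem sub_le_shadowSlope_mul {i : ℕ} (hi : i < k) {u : Fin n → ℝ} (hu : ImpNbr P v (x i) u) :
    dotR c u - dotR c (x i) ≤ shadowSlope c v x i * (dotR v u - dotR v (x i)) := by
  have hpos : 0 < dotR v (u - x i) := by rw [dotR_sub_right]; exact sub_pos.2 hu.2
  have h := (div_le_iff₀ hpos).1 ((hpath.2.1 i hi).2 u hu)
  rwa [dotR_sub_right c u, dotR_sub_right v u] at h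

theorem isTiltedMax_succ {i : ℕ} (hi : i < k) (h : IsTiltedMax P c v (shadowSlope c v x i) (x i)) :
    IsTiltedMax P c v (shadowSlope c v x i) (x (i + 1)) := fun y hy => by
  linarith [h y hy, hpath.sub_eq_shadowSlope_mul hi]

theorem isTiltedMax (hP : IsPolytope P)
    (hstart : ∀ u, Adjacent P (x 0) u → dotR v (x 0) < dotR v u) :
    ∀ i < k, IsTiltedMax P c v (shadowSlope c v x i) (x i) := by
  intro i
  induction i with
  | zero =>
    intro h0
    exact hP.isTiltedMax_of_forall_adjacent (hpath.isVertex h0.le) fun u hu =>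
      hpath.sub_le_shadowSlope_mul h0 ⟨hu, hstart u hu⟩
  | succ i ih =>
    intro hi
    have hprev := hpath.isTiltedMax_succ (by omega) (ih (by omega))
    have hmono : shadowSlope c v x (i + 1) ≤ shadowSlope c v x i := by
      refine le_of_mul_le_mul_right ?_ (sub_pos.2 (hpath.dotR_lt hi))
      rw [← hpath.sub_eq_shadowSlope_mul hi]
      exact hprev _ (hpath.isVertex hi).1
    refine hP.isTiltedMax_of_forall_adjacent (hpath.isVertex hi.le) fun u hu => ?_
    by_cases himp : dotR v (x (i + 1)) < dotR v u
    · exact hpath.sub_le_shadowSlope_mul hi ⟨hu, himp⟩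
    · have := hprev u hu.2.1.1
      nlinarith

theorem exists_isMax (hP : IsPolytope P)
    (hstart : ∀ u, Adjacent P (x 0) u → dotR v (x 0) < dotR v u) :
    ∃ i ≤ k, ∀ y ∈ P, dotR c y ≤ dotR c (x i) := by
  have hopt := hpath.isTiltedMax hP hstart
  by_cases hneg : ∃ i < k, shadowSlope c v x i ≤ 0
  · obtain ⟨i, ⟨hik, hi⟩, hmin⟩ : ∃ i, (i < k ∧ shadowSlope c v x i ≤ 0) ∧
        ∀ j < i, ¬(j < k ∧ shadowSlope c v x j ≤ 0) :=
      ⟨Nat.find hneg, Nat.find_spec hneg, fun j => Nat.find_min hneg⟩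
    refine ⟨i, hik.le, fun y hy => ?_⟩
    have h₁ := hopt i hik y hy
    rcases i with _ | j
    · have hv0 : dotR v (x 0) ≤ dotR v y := by
        have := hP.dotR_le_of_forall_adjacent (w := -v) (hpath.isVertex (Nat.zero_le _))
          (fun u hu => by simpa [dotR_eq_dotProduct] using (hstart u hu).le) hy
        simpa [dotR_eq_dotProduct] using this
      nlinarith
    · have hj : 0 < shadowSlope c v x j := by
        by_contra! h
        exact hmin j (by omega) ⟨by omega, h⟩
      have h₂ := hpath.isTiltedMax_succ (by omega) (hopt j (by omega)) y hy
      rcases le_total (dotR v y) (dotR v (x (j + 1))) with hd | hd <;> nlinarith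
  · push Not at hneg
    refine ⟨k, le_rfl, fun y hy => ?_⟩
    rcases k with _ | j
    · exact hP.dotR_le_of_forall_adjacent (hpath.isVertex le_rfl)
        (fun u hu => absurd ⟨hu, hstart u hu⟩ (hpath.2.2 u)) hy
    · have hvk : dotR v y ≤ dotR v (x (j + 1)) := hP.dotR_le_of_forall_adjacent
        (hpath.isVertex le_rfl) (fun u hu => not_lt.1 fun h => hpath.2.2 u ⟨hu, h⟩) hy
      have := hpath.isTiltedMax_succ (by omega) (hopt j (by omega)) y hy
      nlinarith [hneg j (by omega)]

end ShadowPath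

end Shadow

section ZeroOne

variable {n : ℕ} {P : Set (Fin n → ℝ)} {u x₀ : Fin n → ℝ}

theorem IsPolytope01.isPolytope (hP : IsPolytope01 P) : IsPolytope P :=
  let ⟨V, hV, _, hPV⟩ := hP
  ⟨V, hV, hPV⟩

theorem IsPolytope01.eq_zero_or_eq_one (hP : IsPolytope01 P) (hu : IsVertex P u) (i : Fin n) :
    u i = 0 ∨ u i = 1 := by
  obtain ⟨V, -, hV01, rfl⟩ := hP
  exact hV01 u (by exact_mod_cast extremePoints_convexHull_subset hu) i

theorem dotR_one_sub_two_mul (hx₀ : ∀ i, x₀ i = 0 ∨ x₀ i = 1) (hu : ∀ i, u i = 0 ∨ u i = 1) :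
    dotR (fun i => 1 - 2 * x₀ i) u = #{i | u i = 1} - 2 * #{i | x₀ i = 1 ∧ u i = 1} := by
  have hsummand : ∀ i, (1 - 2 * x₀ i) * u i =
      (if u i = 1 then 1 else 0) - 2 * (if x₀ i = 1 ∧ u i = 1 then 1 else 0) := fun i => by
    rcases hu i with h | h <;> rcases hx₀ i with h₀ | h₀ <;> simp [h, h₀]
  simp only [dotR, hsummand, sum_sub_distrib, ← mul_sum, sum_boole]

theorem eq_of_forall_eq_one_iff (hx₀ : ∀ i, x₀ i = 0 ∨ x₀ i = 1) (hu : ∀ i, u i = 0 ∨ u i = 1)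
    (h : ∀ i, u i = 1 ↔ x₀ i = 1) : u = x₀ := funext fun i => by
  grind

theorem card_filter_and_lt {M : ℕ} (hx₀ : ∀ i, x₀ i = 0 ∨ x₀ i = 1)
    (hu : ∀ i, u i = 0 ∨ u i = 1) (hMx₀ : #{i | x₀ i = 1} = M) (hMu : #{i | u i = 1} = M)
    (hne : u ≠ x₀) : #{i | x₀ i = 1 ∧ u i = 1} < M := by
  rw [filter_and]
  refine lt_of_le_of_ne (hMu ▸ card_le_card inter_subset_right) fun heq => hne ?_
  have h₁ := eq_of_subset_of_card_le inter_subset_left (hMx₀.trans heq.symm).le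
  have h₂ := eq_of_subset_of_card_le inter_subset_right (hMu.trans heq.symm).le
  refine eq_of_forall_eq_one_iff hx₀ hu fun i => ?_
  simpa using congrArg (i ∈ ·) (h₂.symm.trans h₁)

end ZeroOne

theorem le_of_forall_lt_succ {k : ℕ} (f : ℕ → ℕ) (h : ∀ i < k, f (i + 1) < f i) : k ≤ f 0 := by
  suffices ∀ i ≤ k, i + f i ≤ f 0 by linarith [this k le_rfl]
  intro i hi
  induction i with
  | zero => simp
  | succ i ih => linarith [ih (by omega), h i (by omega)]

/-- Lemma 3.6: if every vertex of the 0/1 polytope has exactly `M` coordinates equal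
to `1`, the Slim Shadow rule takes at most `M` steps and reaches a `c`-maximum. -/
theorem slim_shadow_sparsity_bound {n : ℕ} (P : Set (Fin n → ℝ)) (hP : IsPolytope01 P)
    (M : ℕ)
    (hM : ∀ u, IsVertex P u → (Finset.univ.filter fun i : Fin n => u i = 1).card = M)
    (c : Fin n → ℝ) (x0 : Fin n → ℝ) (hx0 : IsVertex P x0)
    (v : Fin n → ℝ) (hv : v = fun i => 1 - 2 * x0 i) :
    ∀ (k : ℕ) (x : ℕ → Fin n → ℝ), ShadowPath P c v k x → x 0 = x0 →
      k ≤ M ∧ ∃ i ≤ k, ∀ y ∈ P, dotR c y ≤ dotR c (x i) := by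
  intro k x hpath h0
  set overlap : (Fin n → ℝ) → ℕ := fun u => #{i | x0 i = 1 ∧ u i = 1}
  have hval : ∀ u, IsVertex P u → dotR v u = M - 2 * overlap u := fun u hu => by
    rw [hv, dotR_one_sub_two_mul (hP.eq_zero_or_eq_one hx0) (hP.eq_zero_or_eq_one hu), hM u hu]
  have hlt : ∀ u, IsVertex P u → u ≠ x0 → overlap u < M := fun u hu =>
    card_filter_and_lt (hP.eq_zero_or_eq_one hx0) (hP.eq_zero_or_eq_one hu) (hM x0 hx0) (hM u hu)
  have hx0M : overlap x0 = M := by simpa [overlap] using hM x0 hx0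
  refine ⟨?_, hpath.exists_isMax hP.isPolytope fun u hu => ?_⟩
  · refine hx0M ▸ h0 ▸ le_of_forall_lt_succ (fun i => overlap (x i)) fun i hi => ?_
    have := hpath.dotR_lt hi
    rw [hval _ (hpath.isVertex hi.le), hval _ (hpath.isVertex hi)] at this
    exact_mod_cast (by linarith : (overlap (x (i + 1)) : ℝ) < overlap (x i))
  · rw [h0] at hu ⊢
    have : (overlap u : ℝ) < M := by exact_mod_cast hlt u hu.2.1 hu.2.2.1.symm
    rw [hval _ hx0, hval _ hu.2.1, hx0M]
    linarith
end
end

section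
/- Let P ⊆ ℝ^n be a 0/1 polytope such that the zero vector 0 is a vertex of P and every vertex of P has at most M coordinates equal to 1, and let c ∈ ℝ^n. Then every Shadow-rule path on P with auxiliary vector v = 1 (the all-ones vector) and objective c starting at 0 has length at most M and contains a vertex maximizing ⟨c,·⟩ over P. -/
open Finset

attribute [local instance] Classical.propDecidable

noncomputable section

/-!
Along a Shadow path with `v = 1` every step strictly increases the number of ones of the vertex,
which bounds the length by `M`. For optimality, each vertex `xᵢ` maximizes `c - λ • v` for some
`λ ≥ 0` (at `x₀ = 0` take `λ = ‖c‖`, as `P` lies in the nonnegative orthant). The slope `λ'` of the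
chosen step bounds the slopes of all `v`-improving edges at `xᵢ`, so by the simplex optimality
criterion (a vertex without improving edge is optimal) `xᵢ`, and hence `xᵢ₊₁`, maximizes
`c - λ' • v`; once `λ' ≤ 0`, or at the last vertex, the current vertex maximizes `c`.

The optimality criterion is proved by turning a functional `f` exposing `x` towards `w` until it
first ties `x` with a `w`-improving vertex; for generic `f` the tied vertices lie on one ray from
`x`, so the exposed face is an edge.
-/

section Polytope

variable {E : Type*} [NormedAddCommGroup E] [NormedSpace ℝ E]

theorem IsExtreme.subset_of_inter_subset {A B C : Set E} (hB : IsExtreme ℝ (convexHull ℝ A) B)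
    (hBc : IsCompact B) (hBcv : Convex ℝ B) (hC : IsClosed C) (hCcv : Convex ℝ C)
    (hABC : A ∩ B ⊆ C) : B ⊆ C := by
  rw [← closure_convexHull_extremePoints hBc hBcv]
  refine closure_minimal (convexHull_min (fun p hp => hABC ⟨?_, extremePoints_subset hp⟩) hCcv) hC
  exact extremePoints_convexHull_subset (hB.extremePoints_subset_extremePoints hp)

theorem mem_extremePoints_segment_right {x u : E} (l : StrongDual ℝ E) (h : l x < l u) :
    u ∈ (segment ℝ x u).extremePoints ℝ := by
  have hexp : {u} = l.toExposed (segment ℝ x u) := by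
    ext p
    simp only [ContinuousLinearMap.toExposed, Set.mem_singleton_iff, Set.mem_ofPred_eq,
      segment_eq_image', Set.mem_image, Set.mem_Icc]
    constructor
    · rintro rfl
      refine ⟨⟨1, ⟨zero_le_one, le_rfl⟩, by module⟩, ?_⟩
      rintro _ ⟨θ, hθ, rfl⟩
      simp only [map_add, map_smul, map_sub, smul_eq_mul]
      nlinarith [hθ.2]
    · rintro ⟨⟨θ, hθ, rfl⟩, hmax⟩
      have h1 := hmax _ ⟨1, ⟨zero_le_one, le_rfl⟩, rfl⟩
      simp only [map_add, map_smul, map_sub, smul_eq_mul] at h1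
      obtain rfl : θ = 1 := le_antisymm hθ.2 (by nlinarith)
      module
  rw [← isExtreme_singleton, hexp]
  exact ContinuousLinearMap.toExposed.isExposed.isExtreme

theorem dense_setOf_forall_apply_ne_zero {D : Set E} (hD : D.Finite) (h0 : ∀ d ∈ D, d ≠ 0) :
    Dense {f : StrongDual ℝ E | ∀ d ∈ D, f d ≠ 0} := by
  simp only [Set.ofPred_forall]
  refine dense_biInter_of_isOpen (fun d _ => isOpen_ne_fun (continuous_eval_const d)
    continuous_const) hD.countable fun d hd => ?_
  refine interior_eq_empty_iff_dense_compl.1 (Set.not_nonempty_iff_eq_empty.1 fun hne => ?_)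
  have htop := Submodule.eq_top_of_nonempty_interior'
    (ContinuousLinearMap.apply ℝ ℝ d : StrongDual ℝ E →L[ℝ] ℝ).ker hne
  obtain ⟨g, -, hg⟩ := exists_dual_vector ℝ d (norm_ne_zero_iff.2 (h0 d hd))
  have hgd : g d = 0 := by simpa using htop.ge (Submodule.mem_top (x := g))
  exact norm_ne_zero_iff.2 (h0 d hd) (by simpa [hgd] using hg.symm)

theorem exists_forall_lt_of_mem_extremePoints_s4 {V : Finset E} {x : E}
    (hx : x ∈ (convexHull ℝ (V : Set E)).extremePoints ℝ) :
    ∃ f : StrongDual ℝ E, ∀ a ∈ V, a ≠ x → f a < f x := by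
  have hxK : x ∉ convexHull ℝ (V.erase x : Set E) := fun hxK => by
    have hK : convexHull ℝ (V.erase x : Set E) ⊆ convexHull ℝ (V : Set E) \ {x} :=
      convexHull_min (fun a ha => ⟨subset_convexHull ℝ _ (by simpa using (mem_erase.1 ha).2),
        (mem_erase.1 ha).1⟩) ((convex_convexHull ℝ _).mem_extremePoints_iff_convex_sdiff.1 hx).2
    exact (hK hxK).2 rfl
  obtain ⟨f, s, hfK, hsx⟩ := geometric_hahn_banach_closed_point (convex_convexHull ℝ _)
    ((V.erase x).finite_toSet.isCompact_convexHull (𝕜 := ℝ)).isClosed hxK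
  exact ⟨f, fun a ha hax =>
    (hfK a (subset_convexHull ℝ _ (by simpa using ⟨ha, hax⟩))).trans hsx⟩

theorem exists_forall_lt_and_forall_ne_zero {V : Finset E} {x : E}
    (hx : x ∈ (convexHull ℝ (V : Set E)).extremePoints ℝ) {D : Finset E} (hD : ∀ d ∈ D, d ≠ 0) :
    ∃ f : StrongDual ℝ E, (∀ a ∈ V, a ≠ x → f a < f x) ∧ ∀ d ∈ D, f d ≠ 0 := by
  obtain ⟨f₀, hf₀⟩ := exists_forall_lt_of_mem_extremePoints_s4 hx
  have hU : IsOpen {f : StrongDual ℝ E | ∀ a ∈ V, a ≠ x → f a < f x} := by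
    simp only [Set.ofPred_forall]
    exact isOpen_biInter_finset fun a _ => isOpen_iInter_of_finite fun _ =>
      isOpen_lt (continuous_eval_const a) (continuous_eval_const x)
  obtain ⟨f, hfD, hf⟩ :=
    (dense_setOf_forall_apply_ne_zero D.finite_toSet hD).exists_mem_open hU ⟨f₀, hf₀⟩
  exact ⟨f, hf, hfD⟩

theorem exists_functional_exposing_segment {V : Finset E} {x : E} {f w : StrongDual ℝ E}
    (hf : ∀ a ∈ V, a ≠ x → f a < f x)
    (hgen : ∀ a ∈ V, ∀ b ∈ V, (w b - w x) * (f a - f x) = (w a - w x) * (f b - f x) →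
      (w b - w x) • (a - x) = (w a - w x) • (b - x))
    (hw : ∃ a ∈ V, w x < w a) :
    ∃ u ∈ V, w x < w u ∧ ∃ Φ : StrongDual ℝ E,
      (∀ a ∈ V, Φ a ≤ Φ x) ∧ Φ u = Φ x ∧ ∀ a ∈ V, Φ a = Φ x → a ∈ segment ℝ x u := by
  obtain ⟨a₀, ha₀, hmin⟩ := (V.filter (w x < w ·)).exists_min_image
    (fun a => (f x - f a) / (w a - w x)) (by simpa [Finset.Nonempty] using hw)
  obtain ⟨ha₀V, hwa₀⟩ := mem_filter.1 ha₀
  -- `t` is the first time at which `f + t • w` ties `x` with a `w`-improving vertex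
  set t := (f x - f a₀) / (w a₀ - w x)
  have ht : 0 < t := div_pos (sub_pos.2 (hf a₀ ha₀V (by rintro rfl; exact hwa₀.false)))
    (sub_pos.2 hwa₀)
  set Φ := f + t • w
  have hΦ : ∀ a, Φ a - Φ x = (f a - f x) + t * (w a - w x) := fun a => by
    simp only [Φ, add_apply, smul_apply, smul_eq_mul]
    ring
  have hlt : ∀ a ∈ V, a ≠ x → w a ≤ w x → Φ a < Φ x := fun a ha hax hwa => by
    nlinarith [hΦ a, hf a ha hax]
  have hle : ∀ a ∈ V, Φ a ≤ Φ x := fun a ha => by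
    rcases eq_or_ne a x with rfl | hax
    · exact le_rfl
    rcases le_or_gt (w a) (w x) with hwa | hwa
    · exact (hlt a ha hax hwa).le
    have h := hmin a (mem_filter.2 ⟨ha, hwa⟩)
    rw [le_div_iff₀ (sub_pos.2 hwa)] at h
    linarith [hΦ a]
  have hΦa₀ : Φ a₀ = Φ x := by
    have := div_mul_cancel₀ (f x - f a₀) (sub_pos.2 hwa₀).ne'
    linarith [hΦ a₀]
  obtain ⟨u, hu, humax⟩ :=
    (V.filter (Φ · = Φ x)).exists_max_image w ⟨a₀, mem_filter.2 ⟨ha₀V, hΦa₀⟩⟩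
  obtain ⟨huV, hΦu⟩ := mem_filter.1 hu
  have hwu : w x < w u := hwa₀.trans_le (humax a₀ (mem_filter.2 ⟨ha₀V, hΦa₀⟩))
  refine ⟨u, huV, hwu, Φ, hle, hΦu, fun a ha hΦa => ?_⟩
  rcases eq_or_ne a x with rfl | hax
  · exact left_mem_segment ℝ a u
  have hwa : w x < w a := not_le.1 fun hwa => (hlt a ha hax hwa).ne hΦa
  have hpar := hgen a ha u huV (by
    linear_combination (w a - w x) * hΦ u - (w u - w x) * hΦ a + (w u - w x) * hΦa
      - (w a - w x) * hΦu)
  rw [segment_eq_image']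
  refine ⟨(w a - w x) / (w u - w x), ⟨(div_pos (sub_pos.2 hwa) (sub_pos.2 hwu)).le,
    (div_le_one (sub_pos.2 hwu)).2 (by linarith [humax a (mem_filter.2 ⟨ha, hΦa⟩)])⟩, ?_⟩
  change x + _ = a
  rw [div_eq_inv_mul, mul_smul, ← hpar, inv_smul_smul₀ (sub_pos.2 hwu).ne']
  abel

theorem isExtreme_segment_of_forall_le {V : Finset E} {x u : E} (hx : x ∈ V) (hu : u ∈ V)
    (Φ : StrongDual ℝ E) (hΦ : ∀ a ∈ V, Φ a ≤ Φ x) (hΦu : Φ u = Φ x)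
    (hseg : ∀ a ∈ V, Φ a = Φ x → a ∈ segment ℝ x u) :
    IsExtreme ℝ (convexHull ℝ (V : Set E)) (segment ℝ x u) := by
  have hxP : x ∈ convexHull ℝ (V : Set E) := subset_convexHull ℝ _ hx
  have huP : u ∈ convexHull ℝ (V : Set E) := subset_convexHull ℝ _ hu
  have hmax : ∀ p ∈ convexHull ℝ (V : Set E), Φ p ≤ Φ x := fun p hp =>
    convexHull_min hΦ (convex_halfSpace_le Φ.toLinearMap.isLinear _) hp
  have hexp := ContinuousLinearMap.toExposed.isExposed (l := Φ) (A := convexHull ℝ (V : Set E))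
  suffices segment ℝ x u = Φ.toExposed (convexHull ℝ (V : Set E)) from this ▸ hexp.isExtreme
  refine Set.Subset.antisymm (fun p hp => ⟨(convex_convexHull ℝ _).segment_subset hxP huP hp,
    fun y hy => ?_⟩) ?_
  · have hΦp : Φ p = Φ x :=
      (convex_hyperplane Φ.toLinearMap.isLinear (Φ x)).segment_subset rfl hΦu hp
    exact hΦp ▸ hmax y hy
  · rw [← convexHull_pair]
    refine hexp.isExtreme.subset_of_inter_subset
      (hexp.isCompact (V.finite_toSet.isCompact_convexHull (𝕜 := ℝ)))
      (hexp.convex (convex_convexHull ℝ _))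
      ((Set.toFinite _).isCompact_convexHull (𝕜 := ℝ)).isClosed (convex_convexHull ℝ _) ?_
    rintro a ⟨haV, -, hamax⟩
    rw [convexHull_pair]
    exact hseg a haV (le_antisymm (hΦ a haV) (hamax x hxP))

theorem exists_isExtreme_segment_of_lt {V : Finset E} {x y : E} {w : StrongDual ℝ E}
    (hx : x ∈ (convexHull ℝ (V : Set E)).extremePoints ℝ) (hy : y ∈ convexHull ℝ (V : Set E))
    (hxy : w x < w y) :
    ∃ u ∈ (convexHull ℝ (V : Set E)).extremePoints ℝ, u ≠ x ∧
      IsExtreme ℝ (convexHull ℝ (V : Set E)) (segment ℝ x u) ∧ w x < w u := by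
  have hxV : x ∈ V := by exact_mod_cast extremePoints_convexHull_subset hx
  obtain ⟨a, ha, hya⟩ :=
    (w.toLinearMap.convexOn convex_univ).exists_ge_of_mem_convexHull (Set.subset_univ _) hy
  -- a generic `f` lets only vertices on a common ray from `x` tie under `f + t • w`
  obtain ⟨f, hf, hfD⟩ := exists_forall_lt_and_forall_ne_zero hx (D := ((V ×ˢ V).image
    fun p => (w p.2 - w x) • (p.1 - x) - (w p.1 - w x) • (p.2 - x)).filter (· ≠ 0))
    fun d hd => (mem_filter.1 hd).2
  have hgen : ∀ a ∈ V, ∀ b ∈ V, (w b - w x) * (f a - f x) = (w a - w x) * (f b - f x) →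
      (w b - w x) • (a - x) = (w a - w x) • (b - x) := fun a ha b hb h => by
    by_contra hne
    refine hfD _ (mem_filter.2 ⟨mem_image.2 ⟨(a, b), mem_product.2 ⟨ha, hb⟩, rfl⟩,
      sub_ne_zero.2 hne⟩) ?_
    simp only [map_sub, map_smul, smul_eq_mul]
    linear_combination h
  obtain ⟨u, hu, hwu, Φ, hΦ, hΦu, hseg⟩ :=
    exists_functional_exposing_segment hf hgen ⟨a, ha, hxy.trans_le hya⟩
  have hedge := isExtreme_segment_of_forall_le hxV hu Φ hΦ hΦu hseg
  exact ⟨u, hedge.extremePoints_subset_extremePoints (mem_extremePoints_segment_right w hwu),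
    fun h => (h ▸ hwu).false, hedge, hwu⟩

end Polytope

section ShadowRule

variable {n : ℕ} {V : Finset (Fin n → ℝ)}

theorem dotR_sub_smul_sub (c v x y : Fin n → ℝ) (l : ℝ) :
    dotR (c - l • v) y - dotR (c - l • v) x = dotR c (y - x) - l * dotR v (y - x) := by
  simp only [dotR, ← Finset.sum_sub_distrib, Finset.mul_sum, Pi.sub_apply, Pi.smul_apply,
    smul_eq_mul]
  exact Finset.sum_congr rfl fun i _ => by ring

theorem dotR_sub_s4 (v x y : Fin n → ℝ) : dotR v (y - x) = dotR v y - dotR v x := dotProduct_sub v y x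

theorem isMaxOn_of_forall_adjacent_le {x w : Fin n → ℝ}
    (hx : IsVertex (convexHull ℝ ↑V) x)
    (h : ∀ u, Adjacent (convexHull ℝ ↑V) x u → dotR w u ≤ dotR w x) :
    IsMaxOn (dotR w) (convexHull ℝ ↑V) x := by
  refine isMaxOn_iff.2 fun y hy => not_lt.1 fun hlt => ?_
  obtain ⟨u, hu, hux, hedge, hwu⟩ := exists_isExtreme_segment_of_lt
    (w := LinearMap.toContinuousLinearMap (dotProductBilin ℝ ℝ w)) hx hy hlt
  exact (h u ⟨hx, hu, hux.symm, hedge⟩).not_gt hwu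

theorem isMaxOn_sub_smul_of_slope_le {x c v : Fin n → ℝ} {l₁ l₂ : ℝ}
    (hx : IsVertex (convexHull ℝ ↑V) x) (hl : l₂ ≤ l₁)
    (hmax : IsMaxOn (dotR (c - l₁ • v)) (convexHull ℝ ↑V) x)
    (hnb : ∀ u, ImpNbr (convexHull ℝ ↑V) v x u →
      dotR c (u - x) ≤ l₂ * dotR v (u - x)) :
    IsMaxOn (dotR (c - l₂ • v)) (convexHull ℝ ↑V) x := by
  refine isMaxOn_iff.2 fun y hy => not_lt.1 fun hy₂ => ?_
  have hy₁ := sub_nonpos.2 (isMaxOn_iff.1 hmax y hy)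
  rw [← sub_pos, dotR_sub_smul_sub] at hy₂
  rw [dotR_sub_smul_sub] at hy₁
  have hl : l₂ < l₁ := hl.lt_of_ne (by rintro rfl; linarith)
  have hv : 0 < dotR v (y - x) := by nlinarith
  -- for `l₂ < l < l₁` below the slope of `y`, some edge at `x` improves `c - l • v`
  have hslope : l₂ < dotR c (y - x) / dotR v (y - x) := (lt_div_iff₀ hv).2 (by linarith)
  obtain ⟨l, hl₂, hl⟩ := _root_.exists_between (lt_min hslope hl)
  obtain ⟨u, hadj, hu⟩ : ∃ u, Adjacent (convexHull ℝ ↑V) x u ∧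
      dotR (c - l • v) x < dotR (c - l • v) u := by
    by_contra! h
    have := isMaxOn_iff.1 (isMaxOn_of_forall_adjacent_le hx h) y hy
    rw [← sub_nonpos, dotR_sub_smul_sub] at this
    nlinarith [(lt_div_iff₀ hv).1 (hl.trans_le (min_le_left _ _))]
  rw [← sub_pos, dotR_sub_smul_sub] at hu
  rcases lt_or_ge (dotR v x) (dotR v u) with hvu | hvu
  · have := hnb u ⟨hadj, hvu⟩
    nlinarith [dotR_sub_s4 v x u]
  · have := sub_nonpos.2 (isMaxOn_iff.1 hmax u hadj.2.1.1)
    rw [dotR_sub_smul_sub] at this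
    nlinarith [dotR_sub_s4 v x u, min_le_right (dotR c (y - x) / dotR v (y - x)) l₁]

theorem isMaxOn_of_no_impNbr {x c v : Fin n → ℝ} {l : ℝ}
    (hx : IsVertex (convexHull ℝ ↑V) x) (hl : 0 ≤ l)
    (hmax : IsMaxOn (dotR (c - l • v)) (convexHull ℝ ↑V) x)
    (hend : ∀ u, ¬ ImpNbr (convexHull ℝ ↑V) v x u) :
    IsMaxOn (dotR c) (convexHull ℝ ↑V) x := by
  simpa using isMaxOn_sub_smul_of_slope_le hx hl hmax fun u hu => (hend u hu).elim

theorem isMaxOn_or_isMaxOn_of_shadow_step {x y c v : Fin n → ℝ} {l : ℝ}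
    (hx : IsVertex (convexHull ℝ ↑V) x) (hl : 0 ≤ l)
    (hmax : IsMaxOn (dotR (c - l • v)) (convexHull ℝ ↑V) x)
    (hy : ImpNbr (convexHull ℝ ↑V) v x y)
    (hbest : ∀ u, ImpNbr (convexHull ℝ ↑V) v x u →
      dotR c (u - x) / dotR v (u - x) ≤ dotR c (y - x) / dotR v (y - x)) :
    IsMaxOn (dotR c) (convexHull ℝ ↑V) x ∨
      ∃ l' : ℝ, 0 ≤ l' ∧ IsMaxOn (dotR (c - l' • v)) (convexHull ℝ ↑V) y := by
  set s := dotR c (y - x) / dotR v (y - x)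
  have hpos : ∀ u, ImpNbr (convexHull ℝ ↑V) v x u → 0 < dotR v (u - x) :=
    fun u hu => by linarith [dotR_sub_s4 v x u, hu.2]
  have hnb : ∀ u, ImpNbr (convexHull ℝ ↑V) v x u →
      dotR c (u - x) ≤ s * dotR v (u - x) := fun u hu => (div_le_iff₀ (hpos u hu)).1 (hbest u hu)
  have hys : dotR c (y - x) = s * dotR v (y - x) := (div_mul_cancel₀ _ (hpos y hy).ne').symm
  rcases le_or_gt s 0 with hs | hs
  · have hnb₀ : ∀ u, ImpNbr (convexHull ℝ ↑V) v x u →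
        dotR c (u - x) ≤ 0 * dotR v (u - x) := fun u hu => by nlinarith [hnb u hu, hpos u hu]
    exact Or.inl (by simpa using isMaxOn_sub_smul_of_slope_le hx hl hmax hnb₀)
  · have hsl : s ≤ l := by
      have := sub_nonpos.2 (isMaxOn_iff.1 hmax y hy.1.2.1.1)
      rw [dotR_sub_smul_sub, hys] at this
      nlinarith [hpos y hy]
    have hxy : dotR (c - s • v) y = dotR (c - s • v) x := by
      linarith [dotR_sub_smul_sub c v x y s]
    exact Or.inr ⟨s, hs.le, fun z hz =>
      (isMaxOn_sub_smul_of_slope_le hx hsl hmax hnb hz).trans_eq hxy.symm⟩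

theorem ShadowPath.exists_isMaxOn_s4 {c v : Fin n → ℝ} {k : ℕ} {x : ℕ → Fin n → ℝ}
    (h : ShadowPath (convexHull ℝ ↑V) c v k x) {l : ℝ} (hl : 0 ≤ l)
    (h0 : IsMaxOn (dotR (c - l • v)) (convexHull ℝ ↑V) (x 0)) :
    ∃ i ≤ k, IsMaxOn (dotR c) (convexHull ℝ ↑V) (x i) := by
  obtain ⟨hvert, hstep, hend⟩ := h
  have key : ∀ i ≤ k, (∃ j ≤ i, IsMaxOn (dotR c) (convexHull ℝ ↑V) (x j)) ∨
      ∃ l : ℝ, 0 ≤ l ∧ IsMaxOn (dotR (c - l • v)) (convexHull ℝ ↑V) (x i) := by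
    intro i hi
    induction i with
    | zero => exact Or.inr ⟨l, hl, h0⟩
    | succ m ih =>
      obtain ⟨j, hj, hjmax⟩ | ⟨l, hl, hmax⟩ := ih (by omega)
      · exact Or.inl ⟨j, by omega, hjmax⟩
      obtain ⟨hy, hbest⟩ := hstep m (by omega)
      exact (isMaxOn_or_isMaxOn_of_shadow_step (hvert m (by omega)) hl hmax hy hbest).imp_left
        fun hm => ⟨m, by omega, hm⟩
  obtain ⟨j, hj, hjmax⟩ | ⟨l, hl, hmax⟩ := key k le_rfl
  · exact ⟨j, hj, hjmax⟩
  · exact ⟨k, le_rfl, isMaxOn_of_no_impNbr (hvert k le_rfl) hl hmax hend⟩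

end ShadowRule

theorem self_le_of_forall_lt_succ {a : ℕ → ℕ} {k : ℕ} (h : ∀ i < k, a i < a (i + 1)) :
    k ≤ a k := by
  induction k with
  | zero => exact Nat.zero_le _
  | succ k ih =>
    have := ih fun i hi => h i (by omega)
    have := h k (by omega)
    omega

section ZeroOne

variable {n : ℕ} {V : Finset (Fin n → ℝ)}

theorem dotR_one_eq_card {p : Fin n → ℝ} (hp : ∀ i, p i = 0 ∨ p i = 1) :
    dotR (fun _ => 1) p = #{i | p i = 1} := by
  simp only [dotR, one_mul, Finset.natCast_card_filter]
  exact Finset.sum_congr rfl fun i _ => by rcases hp i with h | h <;> simp [h]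

theorem ShadowPath.length_le_card {c : Fin n → ℝ} {k : ℕ} {x : ℕ → Fin n → ℝ}
    (hV : ∀ a ∈ V, ∀ i, a i = 0 ∨ a i = 1)
    (h : ShadowPath (convexHull ℝ ↑V) c (fun _ => 1) k x) :
    k ≤ #{i | x k i = 1} := by
  obtain ⟨hvert, hstep, -⟩ := h
  have h01 : ∀ i ≤ k, ∀ j, x i j = 0 ∨ x i j = 1 := fun i hi =>
    hV _ (by exact_mod_cast extremePoints_convexHull_subset (hvert i hi))
  refine self_le_of_forall_lt_succ (a := fun i => #{j | x i j = 1}) fun i hi => ?_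
  have := (hstep i hi).1.2
  rw [dotR_one_eq_card (h01 i hi.le), dotR_one_eq_card (h01 (i + 1) hi)] at this
  exact_mod_cast this

theorem isMaxOn_zero_sub_norm_smul_one (c : Fin n → ℝ) (hV : ∀ a ∈ V, 0 ≤ a) :
    IsMaxOn (dotR (c - ‖c‖ • fun _ => 1)) (convexHull ℝ ↑V) 0 := by
  refine isMaxOn_iff.2 fun y hy => ?_
  have hy0 : 0 ≤ y := convexHull_min hV (convex_Ici 0) hy
  simp only [dotR, Pi.zero_apply, mul_zero, Finset.sum_const_zero]
  refine Finset.sum_nonpos fun i _ => mul_nonpos_of_nonpos_of_nonneg ?_ (hy0 i)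
  simpa using (le_abs_self (c i)).trans (norm_le_pi_norm c i)

end ZeroOne

theorem slim_shadow_from_zero_bound_general {n : ℕ} (P : Set (Fin n → ℝ)) (hP : IsPolytope01 P)
    (M : ℕ)
    (hM : ∀ u, IsVertex P u → (Finset.univ.filter fun i : Fin n => u i = 1).card ≤ M)
    (c : Fin n → ℝ) (v : Fin n → ℝ) (hv : v = fun _ => 1) :
    ∀ (k : ℕ) (x : ℕ → Fin n → ℝ), ShadowPath P c v k x → x 0 = 0 →
      k ≤ M ∧ ∃ i ≤ k, ∀ y ∈ P, dotR c y ≤ dotR c (x i) := by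
  obtain ⟨V, -, hV, rfl⟩ := hP
  subst hv
  intro k x hpath hx0
  have hV0 : ∀ a ∈ V, 0 ≤ a := fun a ha i => by rcases hV a ha i with h | h <;> simp [h]
  refine ⟨(hpath.length_le_card hV).trans (hM _ (hpath.1 k le_rfl)), ?_⟩
  obtain ⟨i, hi, hmax⟩ := hpath.exists_isMaxOn_s4 (norm_nonneg c)
    (hx0 ▸ isMaxOn_zero_sub_norm_smul_one c hV0)
  exact ⟨i, hi, fun y hy => isMaxOn_iff.1 hmax y hy⟩

/-- Lemma 3.7: if `0` is a vertex of the 0/1 polytope and every vertex has at most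
`M` coordinates equal to `1`, then the Slim Shadow rule starting at `0` (with
auxiliary vector `v = 1`) takes at most `M` steps and reaches a `c`-maximum. -/
theorem slim_shadow_from_zero_bound {n : ℕ} (P : Set (Fin n → ℝ)) (hP : IsPolytope01 P)
    (h0 : IsVertex P 0) (M : ℕ)
    (hM : ∀ u, IsVertex P u → (Finset.univ.filter fun i : Fin n => u i = 1).card ≤ M)
    (c : Fin n → ℝ) (v : Fin n → ℝ) (hv : v = fun _ => 1) :
    ∀ (k : ℕ) (x : ℕ → Fin n → ℝ), ShadowPath P c v k x → x 0 = 0 →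
      k ≤ M ∧ ∃ i ≤ k, ∀ y ∈ P, dotR c y ≤ dotR c (x i) :=
  slim_shadow_from_zero_bound_general P hP M hM c v hv
end
end

section
/- Let P ⊆ ℝ^n be a 0/1 polytope of dimension d, let x^0 be a vertex of P, and let c ∈ ℝ^n. Define f : ℝ^n → ℕ (with respect to x^0) by f(u) = max({k ∈ {1,…,n} : u(k) ≠ x^0(k)} ∪ {0}). Consider any finite sequence of vertices x^0, x^1, …, x^k of P such that for each i < k, x^{i+1} maximizes ⟨c,·⟩ among those c-improving neighbors u of x^i whose f-value is minimal (over all c-improving neighbors of x^i), and such that the final vertex x^k has no c-improving neighbor. Then k ≤ d. -/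
open Finset

attribute [local instance] Classical.propDecidable

noncomputable section

/-!
Write `f = lastIdx x⁰` and `F_m` for the set of points of the 0/1 polytope that agree with `x⁰`
in the coordinates `m, m+1, …` (0-indexed). `F_m` is a face: on 0/1 points a linear functional
equals, up to a constant, minus the Hamming distance to `x⁰` in those coordinates.

By induction, `xᵢ` maximizes `⟨c, ·⟩` on `F_{f(xᵢ)}`, so `f` strictly increases along the path.
For the step, let `j` be the last coordinate where `xᵢ₊₁` differs from `x⁰`. No improving
neighbour of `xᵢ` lies in `F_j`, so by the simplex principle (a vertex without improving edges
is optimal) `xᵢ` is optimal on `F_j`. Tilting `c` by the `j`-th coordinate cuts out a face of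
`F_{j+1}` on which both `xᵢ` and the `c`-optimal points of `F_{j+1}` are optimal; an improving
edge of `xᵢ` in that face reaches a `c`-optimal point `z` of `F_{j+1}` with `f(z) = f(xᵢ₊₁)`, and
the choice of `xᵢ₊₁` gives `⟨c, z⟩ ≤ ⟨c, xᵢ₊₁⟩`.

The simplex principle, and the existence of an edge at every vertex behind it, come from the
same move: tilt a functional by one that separates the vertex from the other generators until
the vertex is optimal together with another generator, and recurse on that smaller face.

Finally, the vectors `xᵢ - x⁰` have strictly increasing last nonzero coordinates, so they are
linearly independent in the direction of the affine span, whence `k ≤ d`.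
-/

section ConvexHullFaces

variable {E : Type*} [NormedAddCommGroup E] [NormedSpace ℝ E]

theorem convexHull_filter_eq_toExposed {W : Finset E} {l : StrongDual ℝ E} {x : E}
    (hx : x ∈ W) (hl : ∀ w ∈ W, l w ≤ l x) :
    convexHull ℝ ↑(W.filter fun w => l w = l x) = l.toExposed (convexHull ℝ ↑W) := by
  have hmax : ∀ y ∈ convexHull ℝ (W : Set E), l y ≤ l x := fun y hy =>
    convexHull_min (t := {y | l y ≤ l x}) hl (convex_halfSpace_le l.toLinearMap.isLinear _) hy
  have hxW : x ∈ convexHull ℝ (W : Set E) := subset_convexHull ℝ _ hx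
  refine subset_antisymm (fun u hu => ?_) (fun u hu => ?_)
  · have hsub : ((W.filter fun w => l w = l x : Finset E) : Set E) ⊆
        convexHull ℝ ↑W ∩ {y | l y = l x} := fun w hw => by
      rw [Finset.coe_filter] at hw
      exact ⟨subset_convexHull ℝ _ hw.1, hw.2⟩
    obtain ⟨huW, hux⟩ := convexHull_min hsub
      ((convex_convexHull ℝ _).inter (convex_hyperplane l.toLinearMap.isLinear _)) hu
    exact ⟨huW, fun y hy => (hmax y hy).trans (le_of_eq hux.symm)⟩
  · have hexp : IsExposed ℝ (convexHull ℝ (W : Set E)) (l.toExposed (convexHull ℝ ↑W)) :=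
      ContinuousLinearMap.toExposed.isExposed (𝕜 := ℝ)
    have hcomp := hexp.isCompact (W.finite_toSet.isCompact_convexHull ℝ)
    have hext : (l.toExposed (convexHull ℝ (W : Set E))).extremePoints ℝ ⊆
        ↑(W.filter fun w => l w = l x) := fun p hp => by
      have hpB := extremePoints_subset hp
      rw [Finset.coe_filter]
      exact ⟨extremePoints_convexHull_subset (hexp.isExtreme.extremePoints_subset_extremePoints hp),
        le_antisymm (hmax p hpB.1) (hpB.2 x hxW)⟩
    -- Krein–Milman: the exposed face is the closed convex hull of its extreme points
    rw [← closure_convexHull_extremePoints hcomp (hexp.convex (convex_convexHull ℝ _))] at hu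
    exact closure_minimal (convexHull_mono hext)
      ((Finset.finite_toSet _).isCompact_convexHull ℝ).isClosed hu

theorem isExtreme_convexHull_filter_eq_s5 {W : Finset E} {l : StrongDual ℝ E} {x : E}
    (hx : x ∈ W) (hl : ∀ w ∈ W, l w ≤ l x) :
    IsExtreme ℝ (convexHull ℝ ↑W) (convexHull ℝ (W.filter fun w => l w = l x : Set E)) := by
  rw [convexHull_filter_eq_toExposed hx hl]
  exact (ContinuousLinearMap.toExposed.isExposed (𝕜 := ℝ)).isExtreme

theorem exists_forall_lt_of_mem_extremePoints_convexHull {W : Finset E} {x : E}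
    (hx : x ∈ (convexHull ℝ (W : Set E)).extremePoints ℝ) :
    ∃ g : StrongDual ℝ E, ∀ w ∈ W, w ≠ x → g x < g w := by
  have hsub : (W.erase x : Set E) ⊆ convexHull ℝ ↑W \ {x} := fun w hw =>
    ⟨subset_convexHull ℝ _ (Finset.mem_of_mem_erase hw), Finset.ne_of_mem_erase hw⟩
  have hnot : x ∉ convexHull ℝ (W.erase x : Set E) := fun hmem =>
    ((convex_convexHull ℝ _).mem_extremePoints_iff_mem_sdiff_convexHull_sdiff.1 hx).2
      (convexHull_mono hsub hmem)
  obtain ⟨g, u, hxu, hu⟩ := geometric_hahn_banach_point_closed (convex_convexHull ℝ _)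
    ((W.erase x).finite_toSet.isCompact_convexHull ℝ).isClosed hnot
  exact ⟨g, fun w hw hwx =>
    hxu.trans (hu w (subset_convexHull ℝ _ (Finset.mem_erase.2 ⟨hwx, hw⟩)))⟩

end ConvexHullFaces

theorem exists_forall_sub_smul_le {E : Type*} [AddCommGroup E] [Module ℝ E] [TopologicalSpace E]
    {W : Finset E} {x y : E} {g : StrongDual ℝ E} (hg : ∀ w ∈ W, w ≠ x → g x < g w)
    (h : StrongDual ℝ E) (hy : y ∈ W) (hyx : y ≠ x) :
    ∃ t : ℝ, (∀ w ∈ W, (h - t • g) w ≤ (h - t • g) x) ∧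
      ∃ v ∈ W, v ≠ x ∧ (h - t • g) v = (h - t • g) x := by
  have hpos : ∀ w ∈ W.erase x, 0 < g w - g x := fun w hw =>
    sub_pos.2 (hg w (Finset.mem_of_mem_erase hw) (Finset.ne_of_mem_erase hw))
  obtain ⟨v, hv, hvmax⟩ := (W.erase x).exists_max_image (fun w => (h w - h x) / (g w - g x))
    ⟨y, Finset.mem_erase.2 ⟨hyx, hy⟩⟩
  refine ⟨(h v - h x) / (g v - g x), fun w hw => ?_,
    v, Finset.mem_of_mem_erase hv, Finset.ne_of_mem_erase hv, ?_⟩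
  · rcases eq_or_ne w x with rfl | hwx
    · exact le_rfl
    have hw' := Finset.mem_erase.2 ⟨hwx, hw⟩
    have := (div_le_iff₀ (hpos w hw')).1 (hvmax w hw')
    simp only [sub_apply, smul_apply, smul_eq_mul]
    linarith
  · have := div_mul_cancel₀ (h v - h x) (hpos v hv).ne'
    simp only [sub_apply, smul_apply, smul_eq_mul]
    linarith

section Adjacency

variable {n : ℕ}

theorem Adjacent.of_isExtreme {Q F : Set (Fin n → ℝ)} (hQF : IsExtreme ℝ Q F)
    {x z : Fin n → ℝ} (h : Adjacent F x z) : Adjacent Q x z :=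
  ⟨hQF.extremePoints_subset_extremePoints h.1, hQF.extremePoints_subset_extremePoints h.2.1,
    h.2.2.1, hQF.trans h.2.2.2⟩

theorem Adjacent.right_mem {W : Finset (Fin n → ℝ)} {x z : Fin n → ℝ}
    (h : Adjacent (convexHull ℝ ↑W) x z) : z ∈ W :=
  extremePoints_convexHull_subset h.2.1

theorem exists_adjacent_of_forall_sub_eq_smul {W : Finset (Fin n → ℝ)} {x y d : Fin n → ℝ}
    (hx : x ∈ (convexHull ℝ (W : Set (Fin n → ℝ))).extremePoints ℝ)
    {g : StrongDual ℝ (Fin n → ℝ)} (hg : ∀ w ∈ W, w ≠ x → g x < g w)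
    (hd : ∀ w ∈ W, w - x = (g w - g x) • d) (hy : y ∈ W) (hyx : y ≠ x) :
    ∃ z, Adjacent (convexHull ℝ ↑W) x z := by
  have hxW : x ∈ W := extremePoints_convexHull_subset hx
  obtain ⟨z, hzW, hzmax⟩ := W.exists_max_image g ⟨y, hy⟩
  have hxz : g x < g z := (hg y hy hyx).trans_le (hzmax y hy)
  have hhull : convexHull ℝ ↑W = segment ℝ x z := by
    refine subset_antisymm (convexHull_min (fun w hw => ?_) (convex_segment x z))
      (segment_subset_convexHull hxW hzW)
    have hgw : g x ≤ g w := by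
      rcases eq_or_ne w x with rfl | hwx
      exacts [le_rfl, (hg w hw hwx).le]
    rw [segment_eq_image']
    refine ⟨(g w - g x) / (g z - g x), ⟨div_nonneg (sub_nonneg.2 hgw) (sub_pos.2 hxz).le,
      (div_le_one (sub_pos.2 hxz)).2 (by linarith [hzmax w hw])⟩, ?_⟩
    simp only [hd z hzW, smul_smul, div_mul_cancel₀ _ (sub_pos.2 hxz).ne', ← hd w hw]
    abel
  have hfilter : W.filter (fun w => g w = g z) = {z} := by
    refine Finset.eq_singleton_iff_unique_mem.2 ⟨Finset.mem_filter.2 ⟨hzW, rfl⟩, fun w hw => ?_⟩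
    obtain ⟨hw, hgw⟩ := Finset.mem_filter.1 hw
    simpa [hgw, ← hd z hzW] using hd w hw
  have hz := isExtreme_convexHull_filter_eq_s5 hzW hzmax
  rw [hfilter, Finset.coe_singleton, convexHull_singleton, isExtreme_singleton] at hz
  exact ⟨z, hx, hz, fun h => hxz.ne (congrArg g h), hhull ▸ IsExtreme.rfl⟩

theorem exists_adjacent_of_mem_extremePoints {W : Finset (Fin n → ℝ)} {x y : Fin n → ℝ}
    (hx : x ∈ (convexHull ℝ (W : Set (Fin n → ℝ))).extremePoints ℝ) (hy : y ∈ W) (hyx : y ≠ x) :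
    ∃ z, Adjacent (convexHull ℝ ↑W) x z := by
  induction W using Finset.strongInduction generalizing y with
  | H W ih =>
  have hxW : x ∈ W := extremePoints_convexHull_subset hx
  obtain ⟨g, hg⟩ := exists_forall_lt_of_mem_extremePoints_convexHull hx
  by_cases hcol : ∀ w ∈ W, w - x = (g w - g x) • ((g y - g x)⁻¹ • (y - x))
  · exact exists_adjacent_of_forall_sub_eq_smul hx hg hcol hy hyx
  push Not at hcol
  obtain ⟨w, hw, hwd⟩ := hcol
  -- tilting by a functional `h` that sees `w` off the ray through `y` cuts out a smaller face
  obtain ⟨h, hh⟩ := SeparatingDual.exists_ne_zero (R := ℝ) (sub_ne_zero.2 hwd)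
  obtain ⟨t, hψ, v, hv, hvx, hψv⟩ := exists_forall_sub_smul_le hg h hy hyx
  set S := W.filter fun u => (h - t • g) u = (h - t • g) x
  have hSW : S ⊂ W := by
    refine Finset.ssubset_iff_subset_ne.2 ⟨Finset.filter_subset _ _, fun hSW => hh ?_⟩
    have hwS : w ∈ S := hSW ▸ hw
    have hyS : y ∈ S := hSW ▸ hy
    simp only [S, Finset.mem_filter, sub_apply, smul_apply, smul_eq_mul] at hwS hyS
    have hgy : g y - g x ≠ 0 := (sub_pos.2 (hg y hy hyx)).ne'
    simp only [map_sub, map_smul, smul_eq_mul]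
    field_simp
    linear_combination (g y - g x) * hwS.2 - (g w - g x) * hyS.2
  have hface := isExtreme_convexHull_filter_eq_s5 hxW hψ
  have hxS : x ∈ (convexHull ℝ (S : Set (Fin n → ℝ))).extremePoints ℝ := by
    rw [hface.extremePoints_eq]
    exact ⟨subset_convexHull ℝ _ (Finset.mem_filter.2 ⟨hxW, rfl⟩), hx⟩
  obtain ⟨z, hz⟩ := ih S hSW hxS (Finset.mem_filter.2 ⟨hv, hψv⟩) hvx
  exact ⟨z, hz.of_isExtreme hface⟩

theorem exists_adjacent_lt_of_lt {P : Set (Fin n → ℝ)} {S : Finset (Fin n → ℝ)}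
    (hS : IsExtreme ℝ P (convexHull ℝ ↑S)) {x y : Fin n → ℝ} (hx : x ∈ P.extremePoints ℝ)
    (hxS : x ∈ S) (l : StrongDual ℝ (Fin n → ℝ)) (hy : y ∈ S) (hlt : l x < l y) :
    ∃ z ∈ S, Adjacent P x z ∧ l x < l z := by
  have hxS' : x ∈ (convexHull ℝ (S : Set (Fin n → ℝ))).extremePoints ℝ := by
    rw [hS.extremePoints_eq]
    exact ⟨subset_convexHull ℝ _ hxS, hx⟩
  obtain ⟨g, hg⟩ := exists_forall_lt_of_mem_extremePoints_convexHull hxS'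
  have hyx : y ≠ x := by rintro rfl; exact hlt.false
  obtain ⟨t, hψ, v, hv, hvx, hψv⟩ := exists_forall_sub_smul_le hg l hy hyx
  have ht : 0 < t := by
    have := hψ y hy
    simp only [sub_apply, smul_apply, smul_eq_mul] at this
    nlinarith [hg y hy hyx]
  set T := S.filter fun u => (l - t • g) u = (l - t • g) x
  have hface := isExtreme_convexHull_filter_eq_s5 hxS hψ
  have hxT : x ∈ (convexHull ℝ (T : Set (Fin n → ℝ))).extremePoints ℝ := by
    rw [hface.extremePoints_eq]
    exact ⟨subset_convexHull ℝ _ (Finset.mem_filter.2 ⟨hxS, rfl⟩), hxS'⟩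
  obtain ⟨z, hz⟩ := exists_adjacent_of_mem_extremePoints hxT (Finset.mem_filter.2 ⟨hv, hψv⟩) hvx
  obtain ⟨hzS, hψz⟩ := Finset.mem_filter.1 hz.right_mem
  simp only [sub_apply, smul_apply, smul_eq_mul] at hψz
  have hgz := hg z hzS hz.2.2.1.symm
  exact ⟨z, hzS, hz.of_isExtreme (hS.trans hface), by nlinarith⟩

theorem exists_adjacent_of_two_levels {P : Set (Fin n → ℝ)} {S : Finset (Fin n → ℝ)}
    (hS : IsExtreme ℝ P (convexHull ℝ ↑S)) {x y : Fin n → ℝ} (hx : x ∈ P.extremePoints ℝ)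
    (hxS : x ∈ S) (c e : StrongDual ℝ (Fin n → ℝ)) (he : ∀ w ∈ S, e w = e x ∨ e w = e x + 1)
    (hlow : ∀ w ∈ S, e w = e x → c w ≤ c x) (hy : y ∈ S) (hlt : c x < c y) :
    ∃ z ∈ S, Adjacent P x z ∧ e z = e x + 1 ∧ ∀ w ∈ S, c w ≤ c z := by
  obtain ⟨m, hm, hmax⟩ := S.exists_max_image c ⟨y, hy⟩
  have hym := hmax y hy
  -- tilting `c` by the gap `c m - c x` makes `x` optimal on both levels at once
  have hψ : ∀ w ∈ S, (c - (c m - c x) • e) w ≤ (c - (c m - c x) • e) x := by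
    intro w hw
    simp only [sub_apply, smul_apply, smul_eq_mul]
    rcases he w hw with h | h <;> rw [h]
    · linarith [hlow w hw h]
    · linarith [hmax w hw]
  have hem : e m = e x + 1 := (he m hm).resolve_left fun h => by linarith [hlow m hm h]
  have hface := isExtreme_convexHull_filter_eq_s5 hxS hψ
  obtain ⟨z, hzT, hz, hcz⟩ := exists_adjacent_lt_of_lt (hS.trans hface) hx
    (Finset.mem_filter.2 ⟨hxS, rfl⟩) c
    (Finset.mem_filter.2 ⟨hm, by simp only [sub_apply, smul_apply, smul_eq_mul, hem]; ring⟩)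
    (hlt.trans_le hym)
  obtain ⟨hzS, hψz⟩ := Finset.mem_filter.1 hzT
  simp only [sub_apply, smul_apply, smul_eq_mul] at hψz
  have hez : e z = e x + 1 := (he z hzS).resolve_left fun h => by
    rw [h] at hψz
    linarith
  rw [hez] at hψz
  exact ⟨z, hzS, hz, hez, fun w hw => by linarith [hmax w hw]⟩

end Adjacency

theorem linearIndependent_of_triangular {ι κ R : Type*} [LinearOrder ι] [Ring R]
    [NoZeroDivisors R] (v : ι → κ → R) (hv : ∀ i, ∃ j, v i j ≠ 0 ∧ ∀ l < i, v l j = 0) :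
    LinearIndependent R v := by
  refine linearIndependent_iff'.2 fun s => ?_
  induction s using Finset.induction_on_max with
  | empty => simp
  | insert a s has ih =>
    intro g hsum i hi
    have ha : a ∉ s := fun h => (has a h).false
    obtain ⟨j, hj, hlow⟩ := hv a
    have hga : g a = 0 := by
      have hj' := congrFun hsum j
      simp only [Finset.sum_insert ha, Finset.sum_apply, Pi.smul_apply,
        smul_eq_mul, Pi.zero_apply] at hj'
      rw [Finset.sum_eq_zero fun l hl => by rw [hlow l (has l hl), mul_zero], add_zero] at hj'
      exact (mul_eq_zero.1 hj').resolve_right hj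
    rw [Finset.sum_insert ha, hga, zero_smul, zero_add] at hsum
    rcases Finset.mem_insert.1 hi with rfl | hi
    exacts [hga, ih g hsum i hi]

section LastIdx

variable {n : ℕ}

theorem lastIdx_le_iff {b u : Fin n → ℝ} {m : ℕ} :
    lastIdx b u ≤ m ↔ ∀ j : Fin n, m ≤ (j : ℕ) → u j = b j := by
  simp only [lastIdx, Finset.sup_le_iff, Finset.mem_filter, Finset.mem_univ, true_and]
  exact forall_congr' fun j => by rw [← not_imp_not, not_le, Nat.lt_succ_iff, not_not]

theorem lastIdx_self (b : Fin n → ℝ) : lastIdx b b = 0 :=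
  Nat.le_zero.1 (lastIdx_le_iff.2 fun _ _ => rfl)

theorem lastIdx_le_of_le_succ {b u : Fin n → ℝ} {j : Fin n} (h : lastIdx b u ≤ j + 1)
    (hj : u j = b j) : lastIdx b u ≤ j := by
  refine lastIdx_le_iff.2 fun i hi => ?_
  rcases hi.eq_or_lt with hij | hij
  · rwa [Fin.ext hij.symm]
  · exact lastIdx_le_iff.1 h i hij

theorem exists_eq_lastIdx {b u : Fin n → ℝ} (h : 0 < lastIdx b u) :
    ∃ j : Fin n, u j ≠ b j ∧ lastIdx b u = j + 1 := by
  have hne : (Finset.univ.filter fun j : Fin n => u j ≠ b j).Nonempty :=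
    Finset.nonempty_iff_ne_empty.2 fun he => by simp [lastIdx, he] at h
  obtain ⟨j, hj, hju⟩ := Finset.exists_mem_eq_sup _ hne fun j : Fin n => (j : ℕ) + 1
  exact ⟨j, (Finset.mem_filter.1 hj).2, hju⟩

theorem linearIndependent_sub_of_strictMono_lastIdx {ι : Type*} [LinearOrder ι]
    {b : Fin n → ℝ} {p : ι → Fin n → ℝ} (hp : StrictMono fun i => lastIdx b (p i))
    (hpos : ∀ i, 0 < lastIdx b (p i)) : LinearIndependent ℝ fun i => p i - b := by
  refine linearIndependent_of_triangular _ fun i => ?_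
  obtain ⟨j, hj, hij⟩ := exists_eq_lastIdx (hpos i)
  refine ⟨j, sub_ne_zero.2 hj, fun l hl => sub_eq_zero.2 (lastIdx_le_iff.1 ?_ j le_rfl)⟩
  have : lastIdx b (p l) < lastIdx b (p i) := hp hl
  omega

theorem le_finrank_direction_of_strictMonoOn_lastIdx {P : Set (Fin n → ℝ)} {k : ℕ}
    {p : ℕ → Fin n → ℝ} (hp : ∀ i ≤ k, p i ∈ P)
    (hmono : StrictMonoOn (fun i => lastIdx (p 0) (p i)) (Set.Iic k)) :
    k ≤ Module.finrank ℝ (affineSpan ℝ P).direction := by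
  have hli : LinearIndependent ℝ fun i : Fin k => p (i + 1) - p 0 := by
    refine linearIndependent_sub_of_strictMono_lastIdx (fun i l hil => ?_) fun i => ?_
    · exact hmono (Set.mem_Iic.2 i.isLt) (Set.mem_Iic.2 l.isLt) (Nat.succ_lt_succ hil)
    · have := hmono (Set.mem_Iic.2 (Nat.zero_le k)) (Set.mem_Iic.2 i.isLt) (Nat.succ_pos i)
      simpa [lastIdx_self] using this
  have hdir : Submodule.span ℝ (Set.range fun i : Fin k => p (i + 1) - p 0) ≤
      (affineSpan ℝ P).direction := by
    rw [Submodule.span_le, Set.range_subset_iff]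
    exact fun i => AffineSubspace.vsub_mem_direction (subset_affineSpan ℝ _ (hp _ i.isLt))
      (subset_affineSpan ℝ _ (hp 0 (Nat.zero_le _)))
  calc k = Module.finrank ℝ (Submodule.span ℝ (Set.range fun i : Fin k => p (i + 1) - p 0)) := by
        rw [finrank_span_eq_card hli, Fintype.card_fin]
    _ ≤ _ := Submodule.finrank_mono hdir

end LastIdx

section ZeroOnePolytope

variable {n : ℕ}

theorem one_sub_two_mul_mul_sub {a b : ℝ} (ha : a = 0 ∨ a = 1) (hb : b = 0 ∨ b = 1) :
    (1 - 2 * b) * (a - b) = if a = b then 0 else 1 := by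
  rcases ha with rfl | rfl <;> rcases hb with rfl | rfl <;> norm_num

def dotDual (c : Fin n → ℝ) : StrongDual ℝ (Fin n → ℝ) :=
  ∑ i, c i • ContinuousLinearMap.proj i

@[simp]

theorem dotDual_apply (c u : Fin n → ℝ) : dotDual c u = dotR c u := by
  simp [dotDual, dotR]

variable {V : Finset (Fin n → ℝ)} {b : Fin n → ℝ}

theorem isExtreme_convexHull_filter_forall_eq (hV : ∀ w ∈ V, ∀ i, w i = 0 ∨ w i = 1) (hb : b ∈ V)
    (J : Finset (Fin n)) :
    IsExtreme ℝ (convexHull ℝ ↑V)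
      (convexHull ℝ (V.filter fun w => ∀ j ∈ J, w j = b j : Set (Fin n → ℝ))) := by
  set l : StrongDual ℝ (Fin n → ℝ) := -∑ j ∈ J, (1 - 2 * b j) • ContinuousLinearMap.proj j
  have hl : ∀ w ∈ V, l b - l w = ∑ j ∈ J, if w j = b j then 0 else 1 := by
    intro w hw
    simp only [l, neg_apply, _root_.sum_apply, smul_apply, ContinuousLinearMap.proj_apply,
      smul_eq_mul]
    rw [neg_sub_neg, ← Finset.sum_sub_distrib]
    exact Finset.sum_congr rfl fun j _ => by
      rw [← one_sub_two_mul_mul_sub (hV w hw j) (hV b hb j)]; ring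
  have hnonneg : ∀ w : Fin n → ℝ, ∀ j ∈ J, (0 : ℝ) ≤ if w j = b j then 0 else 1 := fun w j _ => by
    split_ifs <;> norm_num
  have hle : ∀ w ∈ V, l w ≤ l b := fun w hw =>
    sub_nonneg.1 ((hl w hw).symm ▸ Finset.sum_nonneg (hnonneg w))
  have hfilter : V.filter (fun w => ∀ j ∈ J, w j = b j) = V.filter fun w => l w = l b := by
    refine Finset.filter_congr fun w hw => ?_
    rw [← sub_eq_zero, ← neg_eq_zero, neg_sub, hl w hw,
      Finset.sum_eq_zero_iff_of_nonneg (hnonneg w)]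
    exact forall₂_congr fun j _ => by split_ifs with h <;> simp [h]
  rw [hfilter]
  exact isExtreme_convexHull_filter_eq_s5 hb hle

theorem isExtreme_convexHull_filter_lastIdx_le (hV : ∀ w ∈ V, ∀ i, w i = 0 ∨ w i = 1)
    (hb : b ∈ V) (m : ℕ) :
    IsExtreme ℝ (convexHull ℝ ↑V)
      (convexHull ℝ (V.filter fun w => lastIdx b w ≤ m : Set (Fin n → ℝ))) := by
  have hfilter : V.filter (fun w => lastIdx b w ≤ m) =
      V.filter fun w => ∀ j ∈ Finset.univ.filter fun j : Fin n => m ≤ j, w j = b j := by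
    simp [lastIdx_le_iff]
  rw [hfilter]
  exact isExtreme_convexHull_filter_forall_eq hV hb _

theorem forall_le_of_forall_impNbr_lt_lastIdx (hV : ∀ w ∈ V, ∀ i, w i = 0 ∨ w i = 1)
    (hb : b ∈ V) {c x : Fin n → ℝ} (hx : IsVertex (convexHull ℝ ↑V) x) {m : ℕ}
    (hxm : lastIdx b x ≤ m) (h : ∀ u, ImpNbr (convexHull ℝ ↑V) c x u → m < lastIdx b u) :
    ∀ w ∈ V, lastIdx b w ≤ m → dotR c w ≤ dotR c x := by
  intro w hw hwm
  by_contra! hlt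
  obtain ⟨z, hzS, hz, hcz⟩ := exists_adjacent_lt_of_lt
    (isExtreme_convexHull_filter_lastIdx_le hV hb m) hx
    (Finset.mem_filter.2 ⟨extremePoints_convexHull_subset hx, hxm⟩) (dotDual c)
    (Finset.mem_filter.2 ⟨hw, hwm⟩) (by simpa using hlt)
  exact (h z ⟨hz, by simpa using hcz⟩).not_ge (Finset.mem_filter.1 hzS).2

theorem exists_adjacent_lastIdx_eq_of_lt (hV : ∀ w ∈ V, ∀ i, w i = 0 ∨ w i = 1) (hb : b ∈ V)
    {c x y : Fin n → ℝ} {j : Fin n} (hx : IsVertex (convexHull ℝ ↑V) x) (hxj : lastIdx b x ≤ j)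
    (hxopt : ∀ w ∈ V, lastIdx b w ≤ j → dotR c w ≤ dotR c x) (hyV : y ∈ V)
    (hyj : lastIdx b y ≤ j + 1) (hlt : dotR c x < dotR c y) :
    ∃ z, Adjacent (convexHull ℝ ↑V) x z ∧ lastIdx b z = j + 1 ∧
      ∀ w ∈ V, lastIdx b w ≤ j + 1 → dotR c w ≤ dotR c z := by
  set e : StrongDual ℝ (Fin n → ℝ) := (1 - 2 * b j) • ContinuousLinearMap.proj j
  have he : ∀ w ∈ V, e w - e x = if w j = b j then 0 else 1 := fun w hw => by
    simp only [e, smul_apply, ContinuousLinearMap.proj_apply, smul_eq_mul, ← mul_sub,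
      lastIdx_le_iff.1 hxj j le_rfl]
    exact one_sub_two_mul_mul_sub (hV w hw j) (hV b hb j)
  have hlevels : ∀ w ∈ V.filter (lastIdx b · ≤ j + 1), e w = e x ∨ e w = e x + 1 :=
    fun w hw => by
      have := he w (Finset.mem_filter.1 hw).1
      split_ifs at this
      exacts [Or.inl (by linarith), Or.inr (by linarith)]
  have hlow : ∀ w ∈ V.filter (lastIdx b · ≤ j + 1), e w = e x → dotDual c w ≤ dotDual c x :=
    fun w hw hew => by
      obtain ⟨hwV, hwj⟩ := Finset.mem_filter.1 hw
      have := he w hwV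
      split_ifs at this with h
      · simpa using hxopt w hwV (lastIdx_le_of_le_succ hwj h)
      · linarith
  obtain ⟨z, hzS, hz, hez, hzmax⟩ := exists_adjacent_of_two_levels
    (isExtreme_convexHull_filter_lastIdx_le hV hb (j + 1)) hx
    (Finset.mem_filter.2 ⟨extremePoints_convexHull_subset hx, by omega⟩) (dotDual c) e hlevels
    hlow (Finset.mem_filter.2 ⟨hyV, hyj⟩) (by simpa using hlt)
  obtain ⟨hzV, hzj⟩ := Finset.mem_filter.1 hzS
  have hzj' : ¬lastIdx b z ≤ j := fun h => by
    have := he z hzV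
    rw [if_pos (lastIdx_le_iff.1 h j le_rfl)] at this
    linarith
  refine ⟨z, hz, by omega, fun w hw hwj => ?_⟩
  simpa using hzmax w (Finset.mem_filter.2 ⟨hw, hwj⟩)

theorem forall_le_of_ordered_rule_step (hV : ∀ w ∈ V, ∀ i, w i = 0 ∨ w i = 1) (hb : b ∈ V)
    {c x y : Fin n → ℝ} (hx : IsVertex (convexHull ℝ ↑V) x)
    (hxopt : ∀ w ∈ V, lastIdx b w ≤ lastIdx b x → dotR c w ≤ dotR c x)
    (hy : ImpNbr (convexHull ℝ ↑V) c x y)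
    (hmin : ∀ u, ImpNbr (convexHull ℝ ↑V) c x u → lastIdx b y ≤ lastIdx b u)
    (hbest : ∀ u, ImpNbr (convexHull ℝ ↑V) c x u → lastIdx b u = lastIdx b y →
      dotR c u ≤ dotR c y) :
    ∀ w ∈ V, lastIdx b w ≤ lastIdx b y → dotR c w ≤ dotR c y := by
  have hyV : y ∈ V := extremePoints_convexHull_subset hy.1.2.1
  have hxy : lastIdx b x < lastIdx b y := lt_of_not_ge fun h => hy.2.not_ge (hxopt y hyV h)
  obtain ⟨j, -, hjy⟩ := exists_eq_lastIdx (hxy.trans_le' (Nat.zero_le _))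
  have hxj : lastIdx b x ≤ j := by omega
  have hbelow := forall_le_of_forall_impNbr_lt_lastIdx hV hb hx hxj fun u hu => by
    have := hmin u hu
    omega
  obtain ⟨z, hz, hzy, hzmax⟩ :=
    exists_adjacent_lastIdx_eq_of_lt hV hb hx hxj hbelow hyV hjy.le hy.2
  have hyz := hzmax y hyV hjy.le
  have hzy' := hbest z ⟨hz, hy.2.trans_le hyz⟩ (hzy.trans hjy.symm)
  exact fun w hw hwy => (hzmax w hw (hjy ▸ hwy)).trans hzy'

end ZeroOnePolytope

theorem ordered_rule_path_bound_general {n : ℕ} (P : Set (Fin n → ℝ)) (hP : IsPolytope01 P)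
    (d : ℕ) (hd : Module.finrank ℝ (affineSpan ℝ P).direction = d)
    (c : Fin n → ℝ) (x0 : Fin n → ℝ) (hx0 : IsVertex P x0)
    (k : ℕ) (x : ℕ → Fin n → ℝ) (hstart : x 0 = x0)
    (hvert : ∀ i ≤ k, IsVertex P (x i))
    (hstep : ∀ i < k, ImpNbr P c (x i) (x (i + 1)) ∧
      (∀ u, ImpNbr P c (x i) u → lastIdx x0 (x (i + 1)) ≤ lastIdx x0 u) ∧
      (∀ u, ImpNbr P c (x i) u → lastIdx x0 u = lastIdx x0 (x (i + 1)) →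
        dotR c u ≤ dotR c (x (i + 1)))) :
    k ≤ d := by
  obtain ⟨V, -, hV, rfl⟩ := hP
  subst hstart
  have hopt : ∀ i ≤ k, ∀ w ∈ V, lastIdx (x 0) w ≤ lastIdx (x 0) (x i) →
      dotR c w ≤ dotR c (x i) := by
    intro i hi
    induction i with
    | zero =>
      intro w _ hw
      rw [lastIdx_self] at hw
      rw [show w = x 0 from funext fun j => lastIdx_le_iff.1 hw j (Nat.zero_le _)]
    | succ i ih =>
      obtain ⟨hy, hmin, hbest⟩ := hstep i hi
      exact forall_le_of_ordered_rule_step hV (extremePoints_convexHull_subset hx0)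
        (hvert i (by omega)) (ih (by omega)) hy hmin hbest
  have hmono : StrictMonoOn (fun i => lastIdx (x 0) (x i)) (Set.Iic k) :=
    strictMonoOn_Iic_of_lt_succ fun i hi => lt_of_not_ge fun h =>
      (hstep i hi).1.2.not_ge (hopt i hi.le _ (extremePoints_convexHull_subset (hvert _ hi)) h)
  exact hd ▸ le_finrank_direction_of_strictMonoOn_lastIdx (fun i hi => (hvert i hi).1) hmono

/-- Lemma 3.9: the path that at each step moves to the `c`-maximum among the
`f`-minimal `c`-improving neighbors (with `f(u)` the largest coordinate index where
`u` differs from `x⁰`) has length at most the dimension `d` of the polytope. -/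
theorem ordered_rule_path_bound {n : ℕ} (P : Set (Fin n → ℝ)) (hP : IsPolytope01 P)
    (d : ℕ) (hd : Module.finrank ℝ (affineSpan ℝ P).direction = d)
    (c : Fin n → ℝ) (x0 : Fin n → ℝ) (hx0 : IsVertex P x0)
    (k : ℕ) (x : ℕ → Fin n → ℝ) (hstart : x 0 = x0)
    (hvert : ∀ i ≤ k, IsVertex P (x i))
    (hstep : ∀ i < k, ImpNbr P c (x i) (x (i + 1)) ∧
      (∀ u, ImpNbr P c (x i) u → lastIdx x0 (x (i + 1)) ≤ lastIdx x0 u) ∧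
      (∀ u, ImpNbr P c (x i) u → lastIdx x0 u = lastIdx x0 (x (i + 1)) →
        dotR c u ≤ dotR c (x (i + 1))))
    (hend : ∀ u, ¬ ImpNbr P c (x k) u) :
    k ≤ d :=
  ordered_rule_path_bound_general P hP d hd c x0 hx0 k x hstart hvert hstep
end
end

section
/- Let c ∈ ℤ^n, set c* = ‖c‖₁ + 2 where ‖c‖₁ = Σ_{j=1}^n |c(j)|, and define v ∈ ℝ^n by v(j) = (c*)^j. For w ∈ {0,1}^n define f(w) = max({j ∈ {1,…,n} : w(j) = 1} ∪ {0}). Let x, u⁰, u¹ ∈ {0,1}^n satisfy f(x) < f(u⁰) < f(u¹), ⟨c, u⁰ − x⟩ ≥ 1, and ⟨c, u¹ − x⟩ ≥ 1. Then ⟨v, u⁰ − x⟩ > 0, ⟨v, u¹ − x⟩ > 0, and ⟨c, u⁰ − x⟩ / ⟨v, u⁰ − x⟩ > ⟨c, u¹ − x⟩ / ⟨v, u¹ − x⟩. -/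
open Finset

attribute [local instance] Classical.propDecidable

noncomputable section

/-!
Write `C = c* = ‖c‖₁ + 2` and `d = u - x` for a 0/1 vector `u` with `f(x) < f(u) = k + 1`.
Then `d` vanishes above `k`, `d k = 1` and `|d j| ≤ 1`, so `⟨v, d⟩` differs from `C^(k+1)` by
at most the geometric sum `C + ⋯ + C^k = (C^(k+1) - C)/(C - 1)`. Hence
`(C - 2) C^(k+1) + C ≤ (C - 1) ⟨v, d⟩ ≤ C^(k+2) - C`, which is positive. Since the `c`-gains
lie in `[1, C - 2]`, the slope comparison reduces to `(C - 2) ⟨v, u⁰ - x⟩ < ⟨v, u¹ - x⟩`, which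
follows from these bounds because `f(u¹) ≥ f(u⁰) + 1`.
-/

lemma abs_sub_le_one_of_eq_zero_or_eq_one {a b : ℝ} (ha : a = 0 ∨ a = 1)
    (hb : b = 0 ∨ b = 1) : |a - b| ≤ 1 := by
  rcases ha with rfl | rfl <;> rcases hb with rfl | rfl <;> norm_num

lemma dotR_le_sum_abs {n : ℕ} (c w : Fin n → ℝ) (hw : ∀ j, |w j| ≤ 1) :
    dotR c w ≤ ∑ j, |c j| := by
  refine sum_le_sum fun j _ => ?_
  calc c j * w j ≤ |c j| * |w j| := (le_abs_self _).trans (abs_mul _ _).le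
    _ ≤ |c j| := mul_le_of_le_one_right (abs_nonneg _) (hw j)

lemma abs_sum_mul_sub_le_sum_Iio {ι : Type*} [Fintype ι] [LinearOrder ι]
    [LocallyFiniteOrderBot ι] {w d : ι → ℝ} {k : ι} (hw : ∀ j, 0 ≤ w j)
    (hd : ∀ j, |d j| ≤ 1) (hk : d k = 1) (hgt : ∀ j, k < j → d j = 0) :
    |∑ j, w j * d j - w k| ≤ ∑ j ∈ Iio k, w j := by
  have hsplit : ∑ j, w j * d j = ∑ j ∈ Iio k, w j * d j + w k := by
    rw [← sum_subset (subset_univ (Iic k)), ← sum_Iio_add_eq_sum_Iic, hk, mul_one]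
    intro j _ hj
    rw [hgt j (not_le.mp (by simpa using hj)), mul_zero]
  rw [hsplit, add_sub_cancel_right]
  refine (abs_sum_le_sum_abs _ _).trans (sum_le_sum fun j _ => ?_)
  rw [abs_mul, abs_of_nonneg (hw j)]
  exact mul_le_of_le_one_right (hw j) (hd j)

lemma sub_one_mul_sum_Iio_pow_succ {n : ℕ} (C : ℝ) (k : Fin n) :
    (C - 1) * ∑ j ∈ Iio k, C ^ ((j : ℕ) + 1) = C ^ ((k : ℕ) + 1) - C := by
  have hval : ∑ j ∈ Iio k, C ^ ((j : ℕ) + 1) = ∑ i ∈ range k, C ^ (i + 1) := by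
    rw [← Nat.Iio_eq_range, ← Fin.map_valEmbedding_Iio, sum_map]
    rfl
  simp_rw [hval, pow_succ, ← sum_mul]
  linear_combination C * geom_sum_mul C k

lemma sub_one_mul_dotR_pow_succ_bounds {n : ℕ} {C : ℝ} (hC : 1 ≤ C) {d : Fin n → ℝ}
    {k : Fin n} (hd : ∀ j, |d j| ≤ 1) (hk : d k = 1) (hgt : ∀ j, k < j → d j = 0) :
    (C - 2) * C ^ ((k : ℕ) + 1) + C ≤ (C - 1) * dotR (fun j => C ^ ((j : ℕ) + 1)) d ∧
      (C - 1) * dotR (fun j => C ^ ((j : ℕ) + 1)) d ≤ C ^ ((k : ℕ) + 2) - C := by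
  have hdev := abs_sum_mul_sub_le_sum_Iio (w := fun j : Fin n => C ^ ((j : ℕ) + 1))
    (fun j => by positivity) hd hk hgt
  obtain ⟨hlo, hup⟩ := abs_sub_le_iff.mp hdev
  have hgeom := sub_one_mul_sum_Iio_pow_succ C k
  have hdot : dotR (fun j => C ^ ((j : ℕ) + 1)) d = ∑ j : Fin n, C ^ ((j : ℕ) + 1) * d j :=
    rfl
  have hC1 : 0 ≤ C - 1 := by linarith
  rw [hdot, pow_succ C ((k : ℕ) + 1)]
  constructor
  · nlinarith [mul_le_mul_of_nonneg_left hup hC1]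
  · nlinarith [mul_le_mul_of_nonneg_left hlo hC1]

lemma ne_one_of_lastOne_lt {n : ℕ} {u : Fin n → ℝ} {j : Fin n}
    (h : lastOne u < (j : ℕ) + 1) : u j ≠ 1 := fun hj =>
  h.not_ge (le_sup (f := fun j : Fin n => (j : ℕ) + 1) (by simpa using hj))

lemma exists_eq_one_of_lastOne_pos {n : ℕ} {u : Fin n → ℝ} (h : 0 < lastOne u) :
    ∃ k : Fin n, u k = 1 ∧ (k : ℕ) + 1 = lastOne u := by
  have hne : (univ.filter fun j : Fin n => u j = 1).Nonempty := by
    rw [nonempty_iff_ne_empty]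
    intro he
    simp [lastOne, he] at h
  obtain ⟨k, hk, hsup⟩ := exists_mem_eq_sup _ hne (fun j : Fin n => (j : ℕ) + 1)
  exact ⟨k, by simpa using hk, hsup.symm⟩

lemma exists_sub_eq_one_of_lastOne_lt {n : ℕ} {x u : Fin n → ℝ}
    (hx : ∀ j, x j = 0 ∨ x j = 1) (hu : ∀ j, u j = 0 ∨ u j = 1)
    (hlt : lastOne x < lastOne u) :
    ∃ k : Fin n, (k : ℕ) + 1 = lastOne u ∧ (u - x) k = 1 ∧ ∀ j, k < j → (u - x) j = 0 := by
  have hzero : ∀ {w : Fin n → ℝ}, (∀ j, w j = 0 ∨ w j = 1) →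
      ∀ j : Fin n, lastOne w < (j : ℕ) + 1 → w j = 0 :=
    fun hw j hj => (hw j).resolve_right (ne_one_of_lastOne_lt hj)
  obtain ⟨k, huk, hk⟩ := exists_eq_one_of_lastOne_pos (hlt.trans_le' (Nat.zero_le _))
  refine ⟨k, hk, ?_, fun j hj => ?_⟩
  · simp [huk, hzero hx k (by omega)]
  · have hj' : lastOne u < (j : ℕ) + 1 := by rw [← hk]; exact Nat.succ_lt_succ hj
    simp [hzero hu j hj', hzero hx j (by omega)]

lemma sub_two_mul_lt_of_bounds {C V₀ V₁ : ℝ} {k₀ k₁ : ℕ} (hC : 2 ≤ C) (hk : k₀ < k₁)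
    (h₀ : (C - 1) * V₀ ≤ C ^ (k₀ + 2) - C) (h₁ : (C - 2) * C ^ (k₁ + 1) + C ≤ (C - 1) * V₁) :
    (C - 2) * V₀ < V₁ := by
  have hpow : (C - 2) * C ^ (k₀ + 2) ≤ (C - 2) * C ^ (k₁ + 1) :=
    mul_le_mul_of_nonneg_left (pow_le_pow_right₀ (by linarith) (by omega)) (by linarith)
  refine lt_of_mul_lt_mul_left ?_ (by linarith : 0 ≤ C - 1)
  calc (C - 1) * ((C - 2) * V₀) = (C - 2) * ((C - 1) * V₀) := by ring
    _ ≤ (C - 2) * (C ^ (k₀ + 2) - C) := mul_le_mul_of_nonneg_left h₀ (by linarith)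
    _ < (C - 2) * C ^ (k₁ + 1) + C := by nlinarith
    _ ≤ (C - 1) * V₁ := h₁

lemma pos_of_sub_two_mul_pow_add_le {C V : ℝ} {k : ℕ} (hC : 2 ≤ C)
    (h : (C - 2) * C ^ (k + 1) + C ≤ (C - 1) * V) : 0 < V := by
  have hC2 : 0 ≤ C - 2 := by linarith
  exact pos_of_mul_pos_right ((by positivity : 0 < (C - 2) * C ^ (k + 1) + C).trans_le h)
    (by linarith)

theorem slope_comparison_distinct_f_general {n : ℕ} (c : Fin n → ℤ) (cR : Fin n → ℝ)
    (hcR : cR = fun i => (c i : ℝ))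
    (cstar : ℝ) (hcstar : cstar = (∑ j, |(c j : ℝ)|) + 2)
    (v : Fin n → ℝ) (hv : v = fun j : Fin n => cstar ^ ((j : ℕ) + 1))
    (x u0 u1 : Fin n → ℝ)
    (hx : ∀ j, x j = 0 ∨ x j = 1) (hu0 : ∀ j, u0 j = 0 ∨ u0 j = 1)
    (hu1 : ∀ j, u1 j = 0 ∨ u1 j = 1)
    (hf0 : lastOne x < lastOne u0) (hf1 : lastOne u0 < lastOne u1)
    (hc0 : 1 ≤ dotR cR (u0 - x)) :
    0 < dotR v (u0 - x) ∧ 0 < dotR v (u1 - x) ∧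
      dotR cR (u1 - x) / dotR v (u1 - x) < dotR cR (u0 - x) / dotR v (u0 - x) := by
  subst hv
  have hC : 2 ≤ cstar := by linarith [sum_nonneg fun j (_ : j ∈ univ) => abs_nonneg (c j : ℝ)]
  have hbox : ∀ {u : Fin n → ℝ}, (∀ j, u j = 0 ∨ u j = 1) → ∀ j, |(u - x) j| ≤ 1 :=
    fun hu j => abs_sub_le_one_of_eq_zero_or_eq_one (hu j) (hx j)
  obtain ⟨k₀, hk₀, hd₀k, hd₀gt⟩ := exists_sub_eq_one_of_lastOne_lt hx hu0 hf0
  obtain ⟨k₁, hk₁, hd₁k, hd₁gt⟩ := exists_sub_eq_one_of_lastOne_lt hx hu1 (hf0.trans hf1)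
  obtain ⟨hlo₀, hup₀⟩ :=
    sub_one_mul_dotR_pow_succ_bounds (C := cstar) (by linarith) (hbox hu0) hd₀k hd₀gt
  obtain ⟨hlo₁, -⟩ :=
    sub_one_mul_dotR_pow_succ_bounds (C := cstar) (by linarith) (hbox hu1) hd₁k hd₁gt
  have hV₀ := pos_of_sub_two_mul_pow_add_le hC hlo₀
  have hV₁ := pos_of_sub_two_mul_pow_add_le hC hlo₁
  have hgain : dotR cR (u1 - x) ≤ cstar - 2 := by
    subst hcR; linarith [dotR_le_sum_abs (fun i => (c i : ℝ)) _ (hbox hu1)]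
  have hkey := sub_two_mul_lt_of_bounds hC (by omega : (k₀ : ℕ) < k₁) hup₀ hlo₁
  refine ⟨hV₀, hV₁, (div_lt_div_iff₀ hV₁ hV₀).mpr ?_⟩
  calc dotR cR (u1 - x) * _ ≤ (cstar - 2) * _ := mul_le_mul_of_nonneg_right hgain hV₀.le
    _ < _ := hkey
    _ ≤ dotR cR (u0 - x) * _ := le_mul_of_one_le_left hV₁.le hc0

/-- Claim 2 (slope comparison, distinct `f`-values): with `c* = ‖c‖₁ + 2` and
`v(j) = (c*)ʲ`, if `f(x) < f(u⁰) < f(u¹)` and both `u⁰, u¹` are `c`-improving by at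
least `1`, then both are `v`-improving and `u⁰` has strictly larger slope. -/
theorem slope_comparison_distinct_f {n : ℕ} (c : Fin n → ℤ) (cR : Fin n → ℝ)
    (hcR : cR = fun i => (c i : ℝ))
    (cstar : ℝ) (hcstar : cstar = (∑ j, |(c j : ℝ)|) + 2)
    (v : Fin n → ℝ) (hv : v = fun j : Fin n => cstar ^ ((j : ℕ) + 1))
    (x u0 u1 : Fin n → ℝ)
    (hx : ∀ j, x j = 0 ∨ x j = 1) (hu0 : ∀ j, u0 j = 0 ∨ u0 j = 1)
    (hu1 : ∀ j, u1 j = 0 ∨ u1 j = 1)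
    (hf0 : lastOne x < lastOne u0) (hf1 : lastOne u0 < lastOne u1)
    (hc0 : 1 ≤ dotR cR (u0 - x)) (hc1 : 1 ≤ dotR cR (u1 - x)) :
    0 < dotR v (u0 - x) ∧ 0 < dotR v (u1 - x) ∧
      dotR cR (u1 - x) / dotR v (u1 - x) < dotR cR (u0 - x) / dotR v (u0 - x) :=
  slope_comparison_distinct_f_general c cR hcR cstar hcstar v hv x u0 u1 hx hu0 hu1 hf0 hf1 hc0
end
end
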